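/- arXiv:1806.05339 — 3 statements merged into one kernel-verified Lean document; each statement's English description precedes it below -/
import Mathlib

section
/- Let f : ℕ^n → ℝ and g : ℕ^m → ℝ be symmetric square-summable functions and let 0 ≤ l < k ≤ min(n,m). Then ‖f ⋆_k^l g‖²_{ℓ²(ℕ^{n+m−k−l})} ≤ (1/2) ‖f ⋆_n^{l+n−k} f‖²_{ℓ²(ℕ^{k−l})} + (1/2) ‖g ⋆_m^{l+m−k} g‖²_{ℓ²(ℕ^{k−l})}. -/
open MeasureTheory ProbabilityTheory Filter Finset

noncomputable section

namespace PaperA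

/-- The sample space `Ω = {-1,1}^ℕ`, coded by `Bool` (`true ↦ +1`). -/
abbrev SeqSpace := ℕ → Bool

/-- The coordinate Bernoulli variables with values `±1`. -/
def Xc (k : ℕ) (ω : SeqSpace) : ℝ := if ω k then 1 else -1

/-- The centered, normalized variables `Y_k = (q - p + X_k)/(2√(pq))`. -/
def Yc (p : ℝ) (k : ℕ) (ω : SeqSpace) : ℝ :=
  ((1 - p) - p + Xc k ω) / (2 * Real.sqrt (p * (1 - p)))

/-- The discrete multiple stochastic integral of order `k`. -/
def MI (p : ℝ) (k : ℕ) (f : (Fin k → ℕ) → ℝ) (ω : SeqSpace) : ℝ :=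
  ∑' i : Fin k → ℕ, f i * ∏ j : Fin k, Yc p (i j) ω

/-- The finite difference operator `D_r`. -/
def Dop (p : ℝ) (r : ℕ) (F : SeqSpace → ℝ) (ω : SeqSpace) : ℝ :=
  Real.sqrt (p * (1 - p)) * (F (Function.update ω r true) - F (Function.update ω r false))

/-- Concatenation of three tuples (as a tuple of arbitrary announced length `d`;
it is the genuine concatenation when `d = a + b + c`). -/
def glue {a b c d : ℕ} (x : Fin a → ℕ) (y : Fin b → ℕ) (z : Fin c → ℕ) : Fin d → ℕ :=
  fun i => if h1 : (i : ℕ) < a then x ⟨i, h1⟩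
    else if h2 : (i : ℕ) - a < b then y ⟨(i : ℕ) - a, h2⟩
    else if h3 : (i : ℕ) - a - b < c then z ⟨(i : ℕ) - a - b, h3⟩ else 0

/-- The contraction `f ⋆_k^l g` of `f : ℕ^n → ℝ` and `g : ℕ^m → ℝ`,
as a function of `(k-l) + (n-k) + (m-k)` variables. -/
def contr (n m k l : ℕ) (f : (Fin n → ℕ) → ℝ) (g : (Fin m → ℕ) → ℝ)
    (y : Fin (k - l) → ℕ) (s : Fin (n - k) → ℕ) (t : Fin (m - k) → ℕ) : ℝ :=
  ∑' x : Fin l → ℕ, f (glue x y s) * g (glue x y t)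

/-- The squared `ℓ²` norm `‖f ⋆_k^l g‖²`. -/
def contrNormSq (n m k l : ℕ) (f : (Fin n → ℕ) → ℝ) (g : (Fin m → ℕ) → ℝ) : ℝ :=
  ∑' q : (Fin (k - l) → ℕ) × (Fin (n - k) → ℕ) × (Fin (m - k) → ℕ),
    (contr n m k l f g q.1 q.2.1 q.2.2) ^ 2

/-- The standard normal cumulative distribution function `Φ`. -/
def stdNormalCDF (x : ℝ) : ℝ := (gaussianReal 0 1 (Set.Iic x)).toReal

/-- The Kolmogorov distance between (the law of) `F` and the standard normal law. -/
def dK {α : Type*} [MeasurableSpace α] (μ : Measure α) (F : α → ℝ) : ℝ :=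
  ⨆ x : ℝ, |(μ {ω | F ω ≤ x}).toReal - stdNormalCDF x|

/-- `μ` makes the coordinates i.i.d. Bernoulli with `P(X_k = 1) = p`. -/
structure IsBernoulliSeq (μ : Measure SeqSpace) (p : ℝ) : Prop where
  prob : IsProbabilityMeasure μ
  indep : iIndepFun (fun k (ω : SeqSpace) => ω k) μ
  marginal : ∀ k, μ {ω | ω k = true} = ENNReal.ofReal p

/-- `f` is a symmetric function of its `k` arguments. -/
def Symm {k : ℕ} (f : (Fin k → ℕ) → ℝ) : Prop :=
  ∀ σ : Equiv.Perm (Fin k), ∀ i, f (i ∘ σ) = f i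

/-- `f` vanishes outside `Δ_k` (off the injective tuples). -/
def VanishDiag {k : ℕ} (f : (Fin k → ℕ) → ℝ) : Prop :=
  ∀ i, ¬ Function.Injective i → f i = 0

/-- Standing assumptions on the kernels `f_1, …, f_n`: symmetric, vanishing on
diagonals, square-summable, and with square-summable pairwise contractions. -/
structure GoodKernels (n : ℕ) (f : (k : ℕ) → (Fin k → ℕ) → ℝ) : Prop where
  symm : ∀ k, k ≤ n → Symm (f k)
  vanish : ∀ k, k ≤ n → VanishDiag (f k)
  sq_summable : ∀ k, k ≤ n → Summable fun i => (f k i) ^ 2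
  contr_summable : ∀ i j k l : ℕ, 1 ≤ i → i ≤ j → j ≤ n → k ≤ i → l ≤ k →
    Summable fun q : (Fin (k - l) → ℕ) × (Fin (i - k) → ℕ) × (Fin (j - k) → ℕ) =>
      (contr i j k l (f i) (f j) q.1 q.2.1 q.2.2) ^ 2

/-- `F = Σ_{k=1}^n I_k(f_k)`. -/
def Fsum (p : ℝ) (n : ℕ) (f : (k : ℕ) → (Fin k → ℕ) → ℝ) (ω : SeqSpace) : ℝ :=
  ∑ k ∈ Finset.Icc 1 n, MI p k (f k) ω

/-- `G_r = Σ_{k=1}^n I_{k-1}(f_k(r,·)) = -D_r L^{-1} F`. -/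
def Gproc (p : ℝ) (n : ℕ) (f : (k : ℕ) → (Fin k → ℕ) → ℝ) (r : ℕ) (ω : SeqSpace) : ℝ :=
  ∑ k ∈ Finset.range n, MI p k (fun v => f (k + 1) (Fin.cons r v)) ω

/-- The quantity `R_F` of Theorem 3.1. -/
def RF (n : ℕ) (p : ℝ) (f : (k : ℕ) → (Fin k → ℕ) → ℝ) : ℝ :=
  (∑ i ∈ Finset.Icc 1 n, ∑ l ∈ Finset.range i,
      (p * (1 - p)) ^ ((l : ℤ) - (i : ℤ)) * contrNormSq i i i l (f i) (f i)) +
    ∑ i ∈ Finset.Icc 1 n, ∑ l ∈ Finset.Ico 1 i,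
      (contrNormSq l i l l (f l) (f i) + contrNormSq i i l l (f i) (f i))

/-- The quantity `R'_F` from the proof of Theorem 3.1. -/
def RF' (n : ℕ) (p : ℝ) (f : (k : ℕ) → (Fin k → ℕ) → ℝ) : ℝ :=
  ∑ i ∈ Finset.Icc 1 n, ∑ j ∈ Finset.Icc i n, ∑ k ∈ Finset.Icc 1 i,
    ∑ l ∈ Finset.range (k + 1),
      if i = j ∧ j = k ∧ k = l then 0
      else (p * (1 - p)) ^ ((l : ℤ) - (k : ℤ)) * contrNormSq i j k l (f i) (f j)



/-! ### Auxiliary lemmas for `contraction_bound_lt` -/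

section Aux

open scoped ENNReal NNReal

lemma summable_of_tsum_ofReal_ne_top {ι : Type*} {h : ι → ℝ} (hn : ∀ i, 0 ≤ h i)
    (hfin : (∑' i, ENNReal.ofReal (h i)) ≠ ⊤) : Summable h := by
  have h1 : Summable fun i => (h i).toNNReal := by
    rw [← ENNReal.tsum_coe_ne_top_iff_summable]
    exact hfin
  have h2 := NNReal.summable_coe.2 h1
  refine h2.congr fun i => ?_
  exact Real.coe_toNNReal _ (hn i)

lemma tsum_cauchy_schwarz {ι : Type*} {A B : ι → ℝ} (hA : Summable fun i => A i ^ 2)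
    (hB : Summable fun i => B i ^ 2) :
    (∑' i, A i * B i) ^ 2 ≤ (∑' i, A i ^ 2) * ∑' i, B i ^ 2 := by
  have habs : Summable fun i => |A i| * |B i| := by
    refine Summable.of_nonneg_of_le (fun i => by positivity) (fun i => ?_)
      ((hA.add hB).div_const 2)
    have h2 := two_mul_le_add_sq |A i| |B i|
    rw [sq_abs, sq_abs] at h2
    nlinarith [abs_nonneg (A i), abs_nonneg (B i)]
  have hAB : Summable fun i => A i * B i := by
    refine Summable.of_abs ?_
    simpa [abs_mul] using habs
  have hA0 : (0:ℝ) ≤ ∑' i, A i ^ 2 := tsum_nonneg fun i => sq_nonneg _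
  have hB0 : (0:ℝ) ≤ ∑' i, B i ^ 2 := tsum_nonneg fun i => sq_nonneg _
  have key : ∑' i, |A i| * |B i| ≤ Real.sqrt ((∑' i, A i ^ 2) * ∑' i, B i ^ 2) := by
    refine Summable.tsum_le_of_sum_le habs fun S => ?_
    have e1 : ∑ i ∈ S, |A i| ^ 2 ≤ ∑' i, A i ^ 2 := by
      simp_rw [sq_abs]; exact Summable.sum_le_tsum S (fun i _ => sq_nonneg _) hA
    have e2 : ∑ i ∈ S, |B i| ^ 2 ≤ ∑' i, B i ^ 2 := by
      simp_rw [sq_abs]; exact Summable.sum_le_tsum S (fun i _ => sq_nonneg _) hB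
    calc ∑ i ∈ S, |A i| * |B i|
        ≤ Real.sqrt (∑ i ∈ S, |A i| ^ 2) * Real.sqrt (∑ i ∈ S, |B i| ^ 2) :=
          Real.sum_mul_le_sqrt_mul_sqrt S _ _
      _ ≤ Real.sqrt (∑' i, A i ^ 2) * Real.sqrt (∑' i, B i ^ 2) :=
          mul_le_mul (Real.sqrt_le_sqrt e1) (Real.sqrt_le_sqrt e2) (Real.sqrt_nonneg _)
            (Real.sqrt_nonneg _)
      _ = Real.sqrt ((∑' i, A i ^ 2) * ∑' i, B i ^ 2) := (Real.sqrt_mul hA0 _).symm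
  have h1 : |∑' i, A i * B i| ≤ ∑' i, |A i| * |B i| := by
    have := norm_tsum_le_tsum_norm (f := fun i => A i * B i) (by simpa [abs_mul] using habs)
    simpa [Real.norm_eq_abs, abs_mul] using this
  calc (∑' i, A i * B i) ^ 2 = |∑' i, A i * B i| ^ 2 := (sq_abs _).symm
    _ ≤ Real.sqrt ((∑' i, A i ^ 2) * ∑' i, B i ^ 2) ^ 2 :=
        pow_le_pow_left₀ (abs_nonneg _) (h1.trans key) 2
    _ = (∑' i, A i ^ 2) * ∑' i, B i ^ 2 := Real.sq_sqrt (mul_nonneg hA0 hB0)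

lemma ennreal_two_mul_le (a b : ℝ≥0∞) : 2 * (a * b) ≤ a ^ 2 + b ^ 2 := by
  rcases eq_or_ne a ⊤ with rfl | ha
  · rcases eq_or_ne b 0 with rfl | hb
    · simp
    · have : (⊤ : ℝ≥0∞) ^ 2 + b ^ 2 = ⊤ := by simp
      rw [this]; exact le_top
  rcases eq_or_ne b ⊤ with rfl | hb
  · have : a ^ 2 + (⊤ : ℝ≥0∞) ^ 2 = ⊤ := by simp
    rw [this]; exact le_top
  lift a to ℝ≥0 using ha
  lift b to ℝ≥0 using hb
  rw [← mul_assoc]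
  have : (2 : ℝ≥0) * a * b ≤ a ^ 2 + b ^ 2 := two_mul_le_add_sq a b
  exact_mod_cast this

lemma glue_mk₁ {a b c d : ℕ} (x : Fin a → ℕ) (y : Fin b → ℕ) (z : Fin c → ℕ)
    {i : ℕ} (hid : i < d) (h1 : i < a) : glue x y z ⟨i, hid⟩ = x ⟨i, h1⟩ := dif_pos h1

lemma glue_mk₂ {a b c d : ℕ} (x : Fin a → ℕ) (y : Fin b → ℕ) (z : Fin c → ℕ)
    {i : ℕ} (hid : i < d) (h1 : ¬ i < a) (h2 : i - a < b) :
    glue x y z ⟨i, hid⟩ = y ⟨i - a, h2⟩ := by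
  unfold glue
  rw [dif_neg h1, dif_pos h2]

lemma glue_mk₃ {a b c d : ℕ} (x : Fin a → ℕ) (y : Fin b → ℕ) (z : Fin c → ℕ)
    {i : ℕ} (hid : i < d) (h1 : ¬ i < a) (h2 : ¬ i - a < b) (h3 : i - a - b < c) :
    glue x y z ⟨i, hid⟩ = z ⟨i - a - b, h3⟩ := by
  unfold glue
  rw [dif_neg h1, dif_neg h2, dif_pos h3]

lemma glue_inj₁ {a b c d : ℕ} (had : a ≤ d) (y : Fin b → ℕ) (z : Fin c → ℕ) :
    Function.Injective fun x : Fin a → ℕ => (glue x y z : Fin d → ℕ) := by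
  intro x x' h
  have h' : (glue x y z : Fin d → ℕ) = glue x' y z := h
  funext i
  have h2 := congrFun h' ⟨(i : ℕ), by omega⟩
  rw [glue_mk₁ _ _ _ _ i.isLt, glue_mk₁ _ _ _ _ i.isLt] at h2
  simpa using h2

lemma glue_inj₂ {a b c d : ℕ} (h : a + b ≤ d) (z : Fin c → ℕ) :
    Function.Injective fun p : (Fin a → ℕ) × (Fin b → ℕ) => (glue p.1 p.2 z : Fin d → ℕ) := by
  intro p q hpq
  have h' : (glue p.1 p.2 z : Fin d → ℕ) = glue q.1 q.2 z := hpq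
  refine Prod.ext ?_ ?_
  · funext i
    have h2 := congrFun h' ⟨(i : ℕ), by omega⟩
    rw [glue_mk₁ _ _ _ _ i.isLt, glue_mk₁ _ _ _ _ i.isLt] at h2
    simpa using h2
  · funext j
    have h3 := congrFun h' ⟨a + (j : ℕ), by omega⟩
    rw [glue_mk₂ p.1 p.2 z _ (show ¬ a + (j : ℕ) < a by omega)
          (show a + (j : ℕ) - a < b by omega)] at h3
    rw [glue_mk₂ q.1 q.2 z _ (show ¬ a + (j : ℕ) < a by omega)
          (show a + (j : ℕ) - a < b by omega)] at h3
    have e1 : ∀ (u : Fin b → ℕ) (hu : a + (j : ℕ) - a < b), u ⟨a + (j : ℕ) - a, hu⟩ = u j :=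
      fun u hu => congrArg u (Fin.ext (by show a + (j : ℕ) - a = (j : ℕ); omega))
    rw [e1 p.2, e1 q.2] at h3
    exact h3

/-- Pack two tuples into one long tuple. -/
def packEquiv (a c e : ℕ) (h : a + c = e) :
    ((Fin a → ℕ) × (Fin c → ℕ)) ≃ (Fin e → ℕ) where
  toFun p := fun i => if h1 : (i : ℕ) < a then p.1 ⟨i, h1⟩ else p.2 ⟨(i : ℕ) - a, by omega⟩
  invFun u := (fun i => u ⟨i, by omega⟩, fun i => u ⟨a + i, by omega⟩)
  left_inv p := by
    refine Prod.ext ?_ ?_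
    · funext i
      dsimp only
      rw [dif_pos i.isLt]
    · funext i
      dsimp only
      rw [dif_neg (by omega : ¬ a + (i : ℕ) < a)]
      exact congrArg p.2 (Fin.ext (by show a + (i : ℕ) - a = (i : ℕ); omega))
  right_inv u := by
    funext i
    dsimp only
    by_cases h1 : (i : ℕ) < a
    · rw [dif_pos h1]
    · rw [dif_neg h1]
      exact congrArg u (Fin.ext (by show a + ((i : ℕ) - a) = (i : ℕ); omega))

lemma pack_mk₁ {a c e : ℕ} (h : a + c = e) (x : Fin a → ℕ) (z : Fin c → ℕ)
    {i : ℕ} (hie : i < e) (h1 : i < a) : packEquiv a c e h (x, z) ⟨i, hie⟩ = x ⟨i, h1⟩ :=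
  dif_pos h1

lemma pack_mk₂ {a c e : ℕ} (h : a + c = e) (x : Fin a → ℕ) (z : Fin c → ℕ)
    {i : ℕ} (hie : i < e) (h1 : ¬ i < a) (h2 : i - a < c) :
    packEquiv a c e h (x, z) ⟨i, hie⟩ = z ⟨i - a, h2⟩ := by
  show (if h1 : i < a then x ⟨i, h1⟩ else z ⟨i - a, by omega⟩) = _
  rw [dif_neg h1]

/-- Cast between tuple types of propositionally equal lengths. -/
def castEquiv {p q : ℕ} (h : p = q) : (Fin p → ℕ) ≃ (Fin q → ℕ) where
  toFun y j := y (Fin.cast h.symm j)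
  invFun y j := y (Fin.cast h j)
  left_inv y := funext fun j => by congr 1
  right_inv y := funext fun j => by congr 1

/-- The block-swap permutation used to compare `(x, y, s)` with `((x, s), y)`. -/
def swapPerm (l k n : ℕ) (hlk : l ≤ k) (hkn : k ≤ n) : Equiv.Perm (Fin n) where
  toFun i := ⟨if (i : ℕ) < l then i else if (i : ℕ) < k then i + (n - k) else i - (k - l),
    by rcases i with ⟨i, hi⟩; dsimp; split_ifs <;> omega⟩
  invFun j := ⟨if (j : ℕ) < l then j else if (j : ℕ) < l + n - k then j + (k - l) else j - (n - k),
    by rcases j with ⟨j, hj⟩; dsimp; split_ifs <;> omega⟩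
  left_inv i := by
    rcases i with ⟨i, hi⟩
    apply Fin.ext
    dsimp
    split_ifs <;> omega
  right_inv j := by
    rcases j with ⟨j, hj⟩
    apply Fin.ext
    dsimp
    split_ifs <;> omega

lemma tsum_split {X Y Z : Type*} (φ : X → Y → ENNReal) (γ : X → Z → ENNReal) :
    (∑' q : X × Y × Z, φ q.1 q.2.1 * γ q.1 q.2.2)
      = ∑' y : X, (∑' s : Y, φ y s) * (∑' t : Z, γ y t) := by
  have h1 : (∑' q : X × Y × Z, φ q.1 q.2.1 * γ q.1 q.2.2)
      = ∑' (y : X) (r : Y × Z), φ y r.1 * γ y r.2 :=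
    ENNReal.tsum_prod (f := fun (y : X) (r : Y × Z) => φ y r.1 * γ y r.2)
  rw [h1]
  refine tsum_congr fun y => ?_
  have h2 : (∑' (r : Y × Z), φ y r.1 * γ y r.2) = ∑' (s : Y) (t : Z), φ y s * γ y t :=
    ENNReal.tsum_prod (f := fun (s : Y) (t : Z) => φ y s * γ y t)
  rw [h2, ← ENNReal.tsum_mul_right]
  exact tsum_congr fun s => ENNReal.tsum_mul_left

set_option maxHeartbeats 2000000 in
lemma side_eq {n k l : ℕ} (hlk : l ≤ k) (hkn : k ≤ n)
    (f : (Fin n → ℕ) → ℝ) (hfs : Symm f) (hf : Summable fun i => f i ^ 2) :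
    (∑' y : Fin (k - l) → ℕ,
        (∑' s : Fin (n - k) → ℕ, ∑' x : Fin l → ℕ, ENNReal.ofReal (f (glue x y s) ^ 2)) ^ 2)
      = ENNReal.ofReal (contrNormSq n n n (l + n - k) f f) := by
  have e : n - (l + n - k) = k - l := by omega
  have hle : l + n - k ≤ n := by omega
  set z0 : Fin (n - n) → ℕ := fun _ => 0 with hz0
  let E1 : (Fin (k - l) → ℕ) ≃ (Fin (n - (l + n - k)) → ℕ) := castEquiv e.symm
  let pk : ((Fin l → ℕ) × (Fin (n - k) → ℕ)) ≃ (Fin (l + n - k) → ℕ) :=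
    packEquiv l (n - k) (l + n - k) (by omega)
  have hsum_u : ∀ y' : Fin (n - (l + n - k)) → ℕ,
      Summable fun u : Fin (l + n - k) → ℕ => f (glue u y' z0) ^ 2 := fun y' =>
    hf.comp_injective (glue_inj₁ hle y' z0)
  set Cf : (Fin (n - (l + n - k)) → ℕ) → ℝ :=
    fun y' => ∑' u : Fin (l + n - k) → ℕ, f (glue u y' z0) ^ 2 with hCfdef
  have hCf0 : ∀ y', 0 ≤ Cf y' := fun y' => tsum_nonneg fun _ => sq_nonneg _
  have hE1 : ∀ (y : Fin (k - l) → ℕ) (j : Fin (n - (l + n - k))),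
      E1 y j = y ⟨(j : ℕ), by omega⟩ := fun y j => rfl
  have claim : ∀ (x : Fin l → ℕ) (s : Fin (n - k) → ℕ) (y : Fin (k - l) → ℕ),
      f (glue x y s) = f (glue (pk (x, s)) (E1 y) z0) := by
    intro x s y
    have hperm := hfs (swapPerm l k n hlk hkn) (glue (pk (x, s)) (E1 y) z0)
    rw [← hperm]
    congr 1
    funext i
    rcases i with ⟨i, hi⟩
    show glue x y s ⟨i, hi⟩
      = glue (pk (x, s)) (E1 y) z0 (swapPerm l k n hlk hkn ⟨i, hi⟩)
    rcases Nat.lt_or_ge i l with h1 | h1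
    · have hσ : swapPerm l k n hlk hkn ⟨i, hi⟩ = ⟨i, hi⟩ := by
        apply Fin.ext
        show (if i < l then i else if i < k then i + (n - k) else i - (k - l)) = i
        rw [if_pos h1]
      rw [hσ, glue_mk₁ _ _ _ hi h1, glue_mk₁ _ _ _ hi (show i < l + n - k by omega),
        pack_mk₁ _ _ _ _ h1]
    · rcases Nat.lt_or_ge i k with h2 | h2
      · have hσ : swapPerm l k n hlk hkn ⟨i, hi⟩ = ⟨i + (n - k), by omega⟩ := by
          apply Fin.ext
          show (if i < l then i else if i < k then i + (n - k) else i - (k - l)) = i + (n - k)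
          rw [if_neg (by omega), if_pos h2]
        rw [hσ, glue_mk₂ _ _ _ hi (by omega) (show i - l < k - l by omega),
            glue_mk₂ _ _ _ (by omega) (show ¬ i + (n - k) < l + n - k by omega)
              (show i + (n - k) - (l + n - k) < n - (l + n - k) by omega),
            hE1]
        exact congrArg y (Fin.ext (by show i - l = i + (n - k) - (l + n - k); omega))
      · have hσ : swapPerm l k n hlk hkn ⟨i, hi⟩ = ⟨i - (k - l), by omega⟩ := by
          apply Fin.ext
          show (if i < l then i else if i < k then i + (n - k) else i - (k - l)) = i - (k - l)
          rw [if_neg (by omega), if_neg (by omega)]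
        rw [hσ, glue_mk₃ _ _ _ hi (by omega) (show ¬ i - l < k - l by omega)
              (show i - l - (k - l) < n - k by omega),
            glue_mk₁ _ _ _ (by omega) (show i - (k - l) < l + n - k by omega),
            pack_mk₂ _ _ _ _ (show ¬ i - (k - l) < l by omega)
              (show i - (k - l) - l < n - k by omega)]
        exact congrArg s (Fin.ext (by show i - l - (k - l) = i - (k - l) - l; omega))
  have hjoint : Summable fun p : (Fin (n - (l + n - k)) → ℕ) × (Fin (l + n - k) → ℕ) =>
      f (glue p.2 p.1 z0) ^ 2 := by
    have hinj : Function.Injective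
        fun p : (Fin (n - (l + n - k)) → ℕ) × (Fin (l + n - k) → ℕ) =>
          (glue p.2 p.1 z0 : Fin n → ℕ) := by
      intro p q hpq
      have h4 := glue_inj₂ (a := l + n - k) (b := n - (l + n - k)) (by omega) z0
        (a₁ := (p.2, p.1)) (a₂ := (q.2, q.1)) hpq
      exact Prod.ext (congrArg Prod.snd h4) (congrArg Prod.fst h4)
    exact hf.comp_injective hinj
  have hsumCf : Summable Cf := by
    apply summable_of_tsum_ofReal_ne_top hCf0
    have hrw : (∑' y', ENNReal.ofReal (Cf y'))
        = ∑' p : (Fin (n - (l + n - k)) → ℕ) × (Fin (l + n - k) → ℕ),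
            ENNReal.ofReal (f (glue p.2 p.1 z0) ^ 2) := by
      rw [ENNReal.tsum_prod (f := fun (y' : Fin (n - (l + n - k)) → ℕ) (u : Fin (l + n - k) → ℕ) =>
        ENNReal.ofReal (f (glue u y' z0) ^ 2))]
      exact tsum_congr fun y' =>
        ENNReal.ofReal_tsum_of_nonneg (fun _ => sq_nonneg _) (hsum_u y')
    rw [hrw, ← ENNReal.ofReal_tsum_of_nonneg (fun _ => sq_nonneg _) hjoint]
    exact ENNReal.ofReal_ne_top
  have hsumCf2 : Summable fun y' => Cf y' ^ 2 := by
    refine Summable.of_nonneg_of_le (fun y' => sq_nonneg _) (fun y' => ?_)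
      (hsumCf.mul_left (∑' y', Cf y'))
    rw [pow_two]
    exact mul_le_mul_of_nonneg_right (Summable.le_tsum hsumCf y' fun _ _ => hCf0 _) (hCf0 _)
  let η : (Fin (n - (l + n - k)) → ℕ)
      ≃ ((Fin (n - (l + n - k)) → ℕ) × (Fin (n - n) → ℕ) × (Fin (n - n) → ℕ)) :=
    { toFun := fun y' => (y', z0, z0)
      invFun := fun q => q.1
      left_inv := fun y' => rfl
      right_inv := fun q => by
        refine Prod.ext rfl (Prod.ext ?_ ?_) <;>
          · funext j; exact absurd j.isLt (by omega) }
  have hfinal : contrNormSq n n n (l + n - k) f f = ∑' y', Cf y' ^ 2 := by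
    simp only [contrNormSq]
    rw [← η.tsum_eq (fun q => (contr n n n (l + n - k) f f q.1 q.2.1 q.2.2) ^ 2)]
    refine tsum_congr fun y' => ?_
    show (contr n n n (l + n - k) f f y' z0 z0) ^ 2 = Cf y' ^ 2
    congr 1
    simp only [contr]
    exact tsum_congr fun u => (pow_two _).symm
  calc ∑' y : Fin (k - l) → ℕ,
        (∑' s : Fin (n - k) → ℕ, ∑' x : Fin l → ℕ, ENNReal.ofReal (f (glue x y s) ^ 2)) ^ 2
      = ∑' y : Fin (k - l) → ℕ, ENNReal.ofReal (Cf (E1 y) ^ 2) := by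
        refine tsum_congr fun y => ?_
        have inner1 : (∑' s : Fin (n - k) → ℕ, ∑' x : Fin l → ℕ,
            ENNReal.ofReal (f (glue x y s) ^ 2)) = ENNReal.ofReal (Cf (E1 y)) := by
          calc ∑' s : Fin (n - k) → ℕ, ∑' x : Fin l → ℕ, ENNReal.ofReal (f (glue x y s) ^ 2)
              = ∑' p : (Fin l → ℕ) × (Fin (n - k) → ℕ),
                  ENNReal.ofReal (f (glue p.1 y p.2) ^ 2) :=
                ENNReal.tsum_comm.trans
                  (ENNReal.tsum_prod
                    (f := fun (x : Fin l → ℕ) (s : Fin (n - k) → ℕ) =>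
                      ENNReal.ofReal (f (glue x y s) ^ 2))).symm
            _ = ∑' p : (Fin l → ℕ) × (Fin (n - k) → ℕ),
                  ENNReal.ofReal (f (glue (pk p) (E1 y) z0) ^ 2) :=
                tsum_congr fun p => by rw [← claim p.1 p.2 y]
            _ = ∑' u : Fin (l + n - k) → ℕ, ENNReal.ofReal (f (glue u (E1 y) z0) ^ 2) :=
                pk.tsum_eq fun u => ENNReal.ofReal (f (glue u (E1 y) z0) ^ 2)
            _ = ENNReal.ofReal (Cf (E1 y)) :=
                (ENNReal.ofReal_tsum_of_nonneg (fun _ => sq_nonneg _) (hsum_u _)).symm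
        rw [inner1, ← ENNReal.ofReal_pow (hCf0 _)]
    _ = ∑' y', ENNReal.ofReal (Cf y' ^ 2) := E1.tsum_eq fun y' => ENNReal.ofReal (Cf y' ^ 2)
    _ = ENNReal.ofReal (∑' y', Cf y' ^ 2) :=
        (ENNReal.ofReal_tsum_of_nonneg (fun _ => sq_nonneg _) hsumCf2).symm
    _ = ENNReal.ofReal (contrNormSq n n n (l + n - k) f f) := by rw [hfinal]

end Aux

set_option maxHeartbeats 2000000

/-- Proposition 2.2, first inequality: for `0 ≤ l < k ≤ min(n,m)`,
`‖f ⋆_k^l g‖² ≤ ½‖f ⋆_n^{l+n-k} f‖² + ½‖g ⋆_m^{l+m-k} g‖²`. -/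
theorem contraction_bound_lt {n m : ℕ}
    (f : (Fin n → ℕ) → ℝ) (g : (Fin m → ℕ) → ℝ)
    (hfs : Symm f) (hgs : Symm g)
    (hf : Summable fun i => (f i) ^ 2) (hg : Summable fun i => (g i) ^ 2)
    (k l : ℕ) (hlk : l < k) (hkn : k ≤ n) (hkm : k ≤ m) :
    contrNormSq n m k l f g ≤
      (1 / 2) * contrNormSq n n n (l + n - k) f f
        + (1 / 2) * contrNormSq m m m (l + m - k) g g := by
  have hkl : l ≤ k := hlk.le
  have hA0 : 0 ≤ contrNormSq n n n (l + n - k) f f := by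
    simp only [contrNormSq]; exact tsum_nonneg fun q => sq_nonneg _
  have hB0 : 0 ≤ contrNormSq m m m (l + m - k) g g := by
    simp only [contrNormSq]; exact tsum_nonneg fun q => sq_nonneg _
  have hsx : ∀ (y : Fin (k - l) → ℕ) (s : Fin (n - k) → ℕ),
      Summable fun x : Fin l → ℕ => f (glue x y s) ^ 2 :=
    fun y s => hf.comp_injective (glue_inj₁ (by omega) y s)
  have htx : ∀ (y : Fin (k - l) → ℕ) (t : Fin (m - k) → ℕ),
      Summable fun x : Fin l → ℕ => g (glue x y t) ^ 2 :=
    fun y t => hg.comp_injective (glue_inj₁ (by omega) y t)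
  have hpoint : ∀ (y : Fin (k - l) → ℕ) (s : Fin (n - k) → ℕ) (t : Fin (m - k) → ℕ),
      ENNReal.ofReal (contr n m k l f g y s t ^ 2) ≤
        (∑' x : Fin l → ℕ, ENNReal.ofReal (f (glue x y s) ^ 2)) *
        (∑' x : Fin l → ℕ, ENNReal.ofReal (g (glue x y t) ^ 2)) := by
    intro y s t
    rw [← ENNReal.ofReal_tsum_of_nonneg (fun _ => sq_nonneg _) (hsx y s),
        ← ENNReal.ofReal_tsum_of_nonneg (fun _ => sq_nonneg _) (htx y t),
        ← ENNReal.ofReal_mul (tsum_nonneg fun _ => sq_nonneg _)]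
    refine ENNReal.ofReal_le_ofReal ?_
    have hcs := tsum_cauchy_schwarz (hsx y s) (htx y t)
    simp only [contr]
    exact hcs
  set T := ∑' q : (Fin (k - l) → ℕ) × (Fin (n - k) → ℕ) × (Fin (m - k) → ℕ),
    ENNReal.ofReal (contr n m k l f g q.1 q.2.1 q.2.2 ^ 2) with hTdef
  have step1 : T ≤ ∑' y : Fin (k - l) → ℕ,
      (∑' s : Fin (n - k) → ℕ, ∑' x : Fin l → ℕ, ENNReal.ofReal (f (glue x y s) ^ 2)) *
      (∑' t : Fin (m - k) → ℕ, ∑' x : Fin l → ℕ, ENNReal.ofReal (g (glue x y t) ^ 2)) := by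
    refine le_trans (ENNReal.tsum_le_tsum fun q => hpoint q.1 q.2.1 q.2.2) (le_of_eq ?_)
    exact tsum_split (fun (y : Fin (k - l) → ℕ) (s : Fin (n - k) → ℕ) =>
        ∑' x : Fin l → ℕ, ENNReal.ofReal (f (glue x y s) ^ 2))
      (fun (y : Fin (k - l) → ℕ) (t : Fin (m - k) → ℕ) =>
        ∑' x : Fin l → ℕ, ENNReal.ofReal (g (glue x y t) ^ 2))
  have hside_f := side_eq hkl hkn f hfs hf
  have hside_g := side_eq hkl hkm g hgs hg
  have step2 : 2 * T ≤ ENNReal.ofReal (contrNormSq n n n (l + n - k) f f)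
      + ENNReal.ofReal (contrNormSq m m m (l + m - k) g g) := by
    calc 2 * T ≤ 2 * ∑' y : Fin (k - l) → ℕ,
          (∑' s : Fin (n - k) → ℕ, ∑' x : Fin l → ℕ, ENNReal.ofReal (f (glue x y s) ^ 2)) *
          (∑' t : Fin (m - k) → ℕ, ∑' x : Fin l → ℕ, ENNReal.ofReal (g (glue x y t) ^ 2)) :=
        mul_le_mul_right step1 2
      _ = ∑' y : Fin (k - l) → ℕ, 2 *
          ((∑' s : Fin (n - k) → ℕ, ∑' x : Fin l → ℕ, ENNReal.ofReal (f (glue x y s) ^ 2)) *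
          (∑' t : Fin (m - k) → ℕ, ∑' x : Fin l → ℕ, ENNReal.ofReal (g (glue x y t) ^ 2))) :=
        ENNReal.tsum_mul_left.symm
      _ ≤ ∑' y : Fin (k - l) → ℕ,
          ((∑' s : Fin (n - k) → ℕ, ∑' x : Fin l → ℕ, ENNReal.ofReal (f (glue x y s) ^ 2)) ^ 2 +
          (∑' t : Fin (m - k) → ℕ, ∑' x : Fin l → ℕ, ENNReal.ofReal (g (glue x y t) ^ 2)) ^ 2) :=
        ENNReal.tsum_le_tsum fun y => ennreal_two_mul_le _ _
      _ = (∑' y : Fin (k - l) → ℕ,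
          (∑' s : Fin (n - k) → ℕ, ∑' x : Fin l → ℕ, ENNReal.ofReal (f (glue x y s) ^ 2)) ^ 2) +
          ∑' y : Fin (k - l) → ℕ,
          (∑' t : Fin (m - k) → ℕ, ∑' x : Fin l → ℕ, ENNReal.ofReal (g (glue x y t) ^ 2)) ^ 2 :=
        ENNReal.tsum_add
      _ = _ := by rw [hside_f, hside_g]
  have hfin : (2 : ENNReal) * T < ⊤ :=
    lt_of_le_of_lt step2
      (ENNReal.add_lt_top.2 ⟨ENNReal.ofReal_lt_top, ENNReal.ofReal_lt_top⟩)
  have hTne : T ≠ ⊤ := by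
    intro h
    rw [h] at hfin
    simp [ENNReal.mul_top] at hfin
  have hsummable : Summable fun q : (Fin (k - l) → ℕ) × (Fin (n - k) → ℕ) × (Fin (m - k) → ℕ) =>
      contr n m k l f g q.1 q.2.1 q.2.2 ^ 2 :=
    summable_of_tsum_ofReal_ne_top (fun q => sq_nonneg _) hTne
  have hofReal : ENNReal.ofReal (contrNormSq n m k l f g) = T := by
    simp only [contrNormSq]
    exact ENNReal.ofReal_tsum_of_nonneg (fun q => sq_nonneg _) hsummable
  have h2 : ENNReal.ofReal (2 * contrNormSq n m k l f g)
      ≤ ENNReal.ofReal (contrNormSq n n n (l + n - k) f f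
          + contrNormSq m m m (l + m - k) g g) := by
    rw [ENNReal.ofReal_mul (by norm_num), ENNReal.ofReal_add hA0 hB0, hofReal,
      ENNReal.ofReal_ofNat]
    exact step2
  have h3 : 2 * contrNormSq n m k l f g
      ≤ contrNormSq n n n (l + n - k) f f + contrNormSq m m m (l + m - k) g g :=
    (ENNReal.ofReal_le_ofReal_iff (by linarith)).1 h2
  linarith

end PaperA
end
end

section
/- Let f : ℕ^n → ℝ and g : ℕ^m → ℝ be symmetric square-summable functions and let 0 ≤ k ≤ min(n,m). Then ‖f ⋆_k^k g‖²_{ℓ²(ℕ^{n+m−2k})} ≤ (1/2) ‖f ⋆_{n−k}^{n−k} f‖²_{ℓ²(ℕ^{2k})} + (1/2) ‖g ⋆_{m−k}^{m−k} g‖²_{ℓ²(ℕ^{2k})}. -/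
open MeasureTheory ProbabilityTheory Filter Finset

noncomputable section

namespace PaperA

/-! ### Auxiliary material for the proof of `contraction_bound_eq` -/

section ContractionAux

private lemma summable_abs_mul {ι : Type*} {u v : ι → ℝ}
    (hu : Summable fun i => u i ^ 2) (hv : Summable fun i => v i ^ 2) :
    Summable fun i => |u i * v i| := by
  refine Summable.of_nonneg_of_le (fun i => abs_nonneg _) (fun i => ?_)
    ((hu.add hv).div_const 2)
  rw [abs_mul]
  nlinarith [sq_abs (u i), sq_abs (v i), sq_nonneg (|u i| - |v i|)]

private lemma summable_mul' {ι : Type*} {u v : ι → ℝ}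
    (hu : Summable fun i => u i ^ 2) (hv : Summable fun i => v i ^ 2) :
    Summable fun i => u i * v i :=
  (summable_abs_mul hu hv).of_abs

/-- Cauchy–Schwarz inequality for infinite sums. -/
private lemma tsum_mul_sq_le {ι : Type*} {u v : ι → ℝ}
    (hu : Summable fun i => u i ^ 2) (hv : Summable fun i => v i ^ 2) :
    (∑' i, u i * v i) ^ 2 ≤ (∑' i, u i ^ 2) * (∑' i, v i ^ 2) := by
  have habs : ∀ w : ι → ℝ, (fun i => |w i| ^ (2 : ℝ)) = fun i => w i ^ 2 := fun w =>
    funext fun i => by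
      rw [show (2 : ℝ) = ((2 : ℕ) : ℝ) by norm_num, Real.rpow_natCast, sq_abs]
  have hu' : Summable fun i => |u i| ^ (2 : ℝ) := by rw [habs]; exact hu
  have hv' : Summable fun i => |v i| ^ (2 : ℝ) := by rw [habs]; exact hv
  have hpq : (2 : ℝ).HolderConjugate 2 := ⟨by norm_num, by norm_num, by norm_num⟩
  have hCS := Real.inner_le_Lp_mul_Lq_tsum_of_nonneg hpq
    (fun i => abs_nonneg (u i)) (fun i => abs_nonneg (v i)) hu' hv'
  have hsum_u : (∑' i, |u i| ^ (2 : ℝ)) = ∑' i, u i ^ 2 := by rw [habs]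
  have hsum_v : (∑' i, |v i| ^ (2 : ℝ)) = ∑' i, v i ^ 2 := by rw [habs]
  have h1 : |∑' i, u i * v i| ≤ ∑' i, |u i * v i| := by
    have hs : Summable fun i => ‖u i * v i‖ := by
      simpa only [Real.norm_eq_abs] using summable_abs_mul hu hv
    simpa only [Real.norm_eq_abs] using norm_tsum_le_tsum_norm hs
  have h0 : |∑' i, u i * v i| ≤ ∑' i, |u i| * |v i| :=
    h1.trans_eq (tsum_congr fun i => abs_mul _ _)
  have hnn : (0 : ℝ) ≤ ∑' i, |u i| * |v i| :=
    tsum_nonneg fun i => mul_nonneg (abs_nonneg _) (abs_nonneg _)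
  have hkey : ∀ a : ℝ, 0 ≤ a → (a ^ (1 / (2 : ℝ))) ^ 2 = a := fun a ha => by
    rw [← Real.rpow_natCast (a ^ (1 / (2 : ℝ))) 2, ← Real.rpow_mul ha]
    norm_num
  calc (∑' i, u i * v i) ^ 2 = |∑' i, u i * v i| ^ 2 := (sq_abs _).symm
    _ ≤ (∑' i, |u i| * |v i|) ^ 2 := pow_le_pow_left₀ (abs_nonneg _) h0 2
    _ ≤ ((∑' i, |u i| ^ (2 : ℝ)) ^ (1 / (2 : ℝ)) * (∑' i, |v i| ^ (2 : ℝ)) ^ (1 / (2 : ℝ))) ^ 2 :=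
        pow_le_pow_left₀ hnn hCS 2
    _ = (∑' i, |u i| ^ (2 : ℝ)) * (∑' i, |v i| ^ (2 : ℝ)) := by
        rw [mul_pow, hkey _ (tsum_nonneg fun i => Real.rpow_nonneg (abs_nonneg _) _),
          hkey _ (tsum_nonneg fun i => Real.rpow_nonneg (abs_nonneg _) _)]
    _ = (∑' i, u i ^ 2) * (∑' i, v i ^ 2) := by rw [hsum_u, hsum_v]

set_option maxHeartbeats 1000000 in
/-- The abstract form of the inequality: for square-summable kernels `F`, `G` sharing the
contracted index, `‖F ⋆ G‖² = ⟨F⋆F, G⋆G⟩ ≤ ½‖F⋆F‖² + ½‖G⋆G‖²`. -/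
private lemma key_contraction {α β γ : Type*} (F : α → β → ℝ) (G : α → γ → ℝ)
    (hF : Summable fun p : α × β => F p.1 p.2 ^ 2)
    (hG : Summable fun p : α × γ => G p.1 p.2 ^ 2) :
    ∑' p : β × γ, (∑' x : α, F x p.1 * G x p.2) ^ 2 ≤
      1 / 2 * ∑' p : α × α, (∑' s : β, F p.1 s * F p.2 s) ^ 2 +
        1 / 2 * ∑' p : α × α, (∑' t : γ, G p.1 t * G p.2 t) ^ 2 := by
  have hFx : ∀ x, Summable fun s => F x s ^ 2 := fun x => hF.prod_factor x
  have hGx : ∀ x, Summable fun t => G x t ^ 2 := fun x => hG.prod_factor x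
  have hFs : ∀ s, Summable fun x => F x s ^ 2 := fun s => by
    have H := hF.comp_injective (i := fun x : α => (x, s)) fun a b h => congrArg Prod.fst h
    simpa only [Function.comp_def] using H
  have hGs : ∀ t, Summable fun x => G x t ^ 2 := fun t => by
    have H := hG.comp_injective (i := fun x : α => (x, t)) fun a b h => congrArg Prod.fst h
    simpa only [Function.comp_def] using H
  set A : α × α → ℝ := fun q => ∑' s, F q.1 s * F q.2 s with hA
  set B : α × α → ℝ := fun q => ∑' t, G q.1 t * G q.2 t with hB
  have hnF : Summable fun x => ∑' s, F x s ^ 2 :=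
    ((summable_prod_of_nonneg fun p => sq_nonneg _).mp hF).2
  have hnG : Summable fun x => ∑' t, G x t ^ 2 :=
    ((summable_prod_of_nonneg fun p => sq_nonneg _).mp hG).2
  have hA2 : Summable fun q : α × α => A q ^ 2 := by
    refine Summable.of_nonneg_of_le (fun q => sq_nonneg _) (fun q => ?_)
      (hnF.mul_of_nonneg hnF (fun x => tsum_nonneg fun s => sq_nonneg _)
        (fun x => tsum_nonneg fun s => sq_nonneg _))
    exact tsum_mul_sq_le (hFx q.1) (hFx q.2)
  have hB2 : Summable fun q : α × α => B q ^ 2 := by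
    refine Summable.of_nonneg_of_le (fun q => sq_nonneg _) (fun q => ?_)
      (hnG.mul_of_nonneg hnG (fun x => tsum_nonneg fun t => sq_nonneg _)
        (fun x => tsum_nonneg fun t => sq_nonneg _))
    exact tsum_mul_sq_le (hGx q.1) (hGx q.2)
  have hAB : Summable fun q => A q * B q := summable_mul' hA2 hB2
  have e1 : ∀ p : β × γ, (∑' x, F x p.1 * G x p.2) ^ 2 =
      ∑' q : α × α, (F q.1 p.1 * G q.1 p.2) * (F q.2 p.1 * G q.2 p.2) := by
    intro p
    have hu : Summable fun x => F x p.1 * G x p.2 := summable_mul' (hFs p.1) (hGs p.2)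
    have huabs : Summable fun x => |F x p.1 * G x p.2| := summable_abs_mul (hFs p.1) (hGs p.2)
    have huv : Summable fun q : α × α => (F q.1 p.1 * G q.1 p.2) * (F q.2 p.1 * G q.2 p.2) := by
      have h2 := huabs.mul_of_nonneg huabs (fun _ => abs_nonneg _) (fun _ => abs_nonneg _)
      refine Summable.of_abs (Summable.of_nonneg_of_le (fun _ => abs_nonneg _) (fun q => ?_) h2)
      rw [abs_mul]
    rw [sq]
    exact Summable.tsum_mul_tsum hu hu huv
  have Hsum : Summable (Function.uncurry fun (p : β × γ) (q : α × α) =>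
      (F q.1 p.1 * G q.1 p.2) * (F q.2 p.1 * G q.2 p.2)) := by
    have base : Summable fun w : (α × β) × α × γ => F w.1.1 w.1.2 ^ 2 * G w.2.1 w.2.2 ^ 2 :=
      hF.mul_of_nonneg hG (fun _ => sq_nonneg _) (fun _ => sq_nonneg _)
    have b1 : Summable fun z : (β × γ) × α × α => F z.2.1 z.1.1 ^ 2 * G z.2.2 z.1.2 ^ 2 := by
      have H := base.comp_injective
        (i := fun z : (β × γ) × α × α => (((z.2.1, z.1.1), (z.2.2, z.1.2)) : (α × β) × α × γ)) (by
          rintro ⟨⟨s, t⟩, x, x'⟩ ⟨⟨s', t'⟩, y, y'⟩ hzz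
          simp only [Prod.mk.injEq] at hzz
          obtain ⟨⟨h1, h2⟩, h3, h4⟩ := hzz
          simp_all)
      simpa only [Function.comp_def] using H
    have b2 : Summable fun z : (β × γ) × α × α => F z.2.2 z.1.1 ^ 2 * G z.2.1 z.1.2 ^ 2 := by
      have H := base.comp_injective
        (i := fun z : (β × γ) × α × α => (((z.2.2, z.1.1), (z.2.1, z.1.2)) : (α × β) × α × γ)) (by
          rintro ⟨⟨s, t⟩, x, x'⟩ ⟨⟨s', t'⟩, y, y'⟩ hzz
          simp only [Prod.mk.injEq] at hzz
          obtain ⟨⟨h1, h2⟩, h3, h4⟩ := hzz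
          simp_all)
      simpa only [Function.comp_def] using H
    refine Summable.of_abs (Summable.of_nonneg_of_le (fun _ => abs_nonneg _) (fun z => ?_)
      ((b1.add b2).div_const 2))
    obtain ⟨⟨s, t⟩, x, x'⟩ := z
    simp only [Function.uncurry]
    rw [abs_le]
    constructor <;>
      nlinarith [sq_nonneg (F x s * G x' t - F x' s * G x t),
        sq_nonneg (F x s * G x' t + F x' s * G x t)]
  have e2 : (∑' p : β × γ, ∑' q : α × α, (F q.1 p.1 * G q.1 p.2) * (F q.2 p.1 * G q.2 p.2))
      = ∑' q : α × α, ∑' p : β × γ, (F q.1 p.1 * G q.1 p.2) * (F q.2 p.1 * G q.2 p.2) :=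
    (Summable.tsum_comm Hsum).symm
  have e3 : ∀ q : α × α,
      (∑' p : β × γ, (F q.1 p.1 * G q.1 p.2) * (F q.2 p.1 * G q.2 p.2)) = A q * B q := by
    intro q
    have hr : ∀ p : β × γ, (F q.1 p.1 * G q.1 p.2) * (F q.2 p.1 * G q.2 p.2)
        = (F q.1 p.1 * F q.2 p.1) * (G q.1 p.2 * G q.2 p.2) := fun p => by ring
    rw [tsum_congr hr]
    have hu : Summable fun s => F q.1 s * F q.2 s := summable_mul' (hFx q.1) (hFx q.2)
    have hv : Summable fun t => G q.1 t * G q.2 t := summable_mul' (hGx q.1) (hGx q.2)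
    have huv : Summable fun p : β × γ => (F q.1 p.1 * F q.2 p.1) * (G q.1 p.2 * G q.2 p.2) := by
      have h2 := (summable_abs_mul (hFx q.1) (hFx q.2)).mul_of_nonneg
        (summable_abs_mul (hGx q.1) (hGx q.2)) (fun _ => abs_nonneg _) (fun _ => abs_nonneg _)
      refine Summable.of_abs (Summable.of_nonneg_of_le (fun _ => abs_nonneg _) (fun p => ?_) h2)
      rw [abs_mul]
    exact (Summable.tsum_mul_tsum hu hv huv).symm
  calc ∑' p : β × γ, (∑' x : α, F x p.1 * G x p.2) ^ 2
      = ∑' q : α × α, A q * B q := (tsum_congr e1).trans (e2.trans (tsum_congr e3))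
    _ ≤ ∑' q : α × α, (A q ^ 2 + B q ^ 2) / 2 := by
        refine Summable.tsum_le_tsum (fun q => ?_) hAB ((hA2.add hB2).div_const 2)
        nlinarith [sq_nonneg (A q - B q)]
    _ = 1 / 2 * (∑' q : α × α, A q ^ 2) + 1 / 2 * ∑' q : α × α, B q ^ 2 := by
        rw [tsum_div_const, Summable.tsum_add hA2 hB2]; ring

private lemma tsum_triple {A B C : Type*} (a : A) (hsub : ∀ z : A, z = a) (h : A × B × C → ℝ) :
    ∑' q : A × B × C, h q = ∑' p : B × C, h (a, p.1, p.2) := by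
  exact (Equiv.tsum_eq
    (⟨fun p => (a, p), fun q => q.2, fun p => rfl,
      fun q => by obtain ⟨z, p⟩ := q; simp [hsub z]⟩ : (B × C) ≃ (A × B × C)) h).symm

private lemma glue_apply_lt {a b c d : ℕ} (x : Fin a → ℕ) (y : Fin b → ℕ) (z : Fin c → ℕ)
    (i : Fin d) (h : (i : ℕ) < a) : glue x y z i = x ⟨i, h⟩ := by
  simp only [glue]
  rw [dif_pos h]

private lemma glue_apply_ge {a b c d : ℕ} (hb : b = 0) (x : Fin a → ℕ) (y : Fin b → ℕ)
    (z : Fin c → ℕ) (i : Fin d) (h1 : ¬ (i : ℕ) < a) (h3 : (i : ℕ) - a - b < c) :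
    glue x y z i = z ⟨(i : ℕ) - a - b, h3⟩ := by
  simp only [glue]
  rw [dif_neg h1, dif_neg (by omega), dif_pos h3]

private lemma glue_injective {a b c d : ℕ} (hb : b = 0) (hd : d = a + c) (y : Fin b → ℕ) :
    Function.Injective (fun p : (Fin a → ℕ) × (Fin c → ℕ) => (glue p.1 y p.2 : Fin d → ℕ)) := by
  rintro ⟨x1, z1⟩ ⟨x2, z2⟩ h
  dsimp only at h
  simp only [Prod.mk.injEq]
  constructor
  · funext j
    have h' := congrFun h (⟨(j : ℕ), by omega⟩ : Fin d)
    rw [glue_apply_lt x1 y z1 _ (show ((⟨(j : ℕ), by omega⟩ : Fin d) : ℕ) < a from j.isLt),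
      glue_apply_lt x2 y z2 _ (show ((⟨(j : ℕ), by omega⟩ : Fin d) : ℕ) < a from j.isLt)] at h'
    simpa using h'
  · funext j
    have h' := congrFun h (⟨a + (j : ℕ), by omega⟩ : Fin d)
    rw [glue_apply_ge hb x1 y z1 _ (show ¬ ((⟨a + (j : ℕ), by omega⟩ : Fin d) : ℕ) < a by
          simp only []; omega)
        (show ((⟨a + (j : ℕ), by omega⟩ : Fin d) : ℕ) - a - b < c by simp only []; omega),
      glue_apply_ge hb x2 y z2 _ (show ¬ ((⟨a + (j : ℕ), by omega⟩ : Fin d) : ℕ) < a by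
          simp only []; omega)
        (show ((⟨a + (j : ℕ), by omega⟩ : Fin d) : ℕ) - a - b < c by simp only []; omega)] at h'
    have hj : (⟨((⟨a + (j : ℕ), by omega⟩ : Fin d) : ℕ) - a - b,
        show ((⟨a + (j : ℕ), by omega⟩ : Fin d) : ℕ) - a - b < c by simp only []; omega⟩ : Fin c)
        = j := by
      apply Fin.ext
      simp only []
      omega
    rwa [hj] at h'

/-- The cyclic rotation of `Fin n` by `k` places. -/
private def rotPerm (n k : ℕ) (hk : k ≤ n) : Equiv.Perm (Fin n) :=
  ((finCongr (show n = (n - k) + k by omega)).trans finAddFlip).trans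
    (finCongr (show k + (n - k) = n by omega))

private lemma rotPerm_coe {n k : ℕ} (hk : k ≤ n) (i : Fin n) :
    ((rotPerm n k hk i : Fin n) : ℕ) =
      if (i : ℕ) < n - k then k + (i : ℕ) else (i : ℕ) - (n - k) := by
  have hi := i.isLt
  rcases lt_or_ge ((i : ℕ)) (n - k) with h | h
  · rw [if_pos h]
    show ((finCongr (show k + (n - k) = n by omega)
        (finAddFlip (finCongr (show n = (n - k) + k by omega) i)) : Fin n) : ℕ) = _
    rw [show (finCongr (show n = (n - k) + k by omega) i)
        = (⟨(i : ℕ), by omega⟩ : Fin ((n - k) + k)) from rfl,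
      finAddFlip_apply_mk_left h]
    simp
  · rw [if_neg (by omega)]
    show ((finCongr (show k + (n - k) = n by omega)
        (finAddFlip (finCongr (show n = (n - k) + k by omega) i)) : Fin n) : ℕ) = _
    rw [show (finCongr (show n = (n - k) + k by omega) i)
        = (⟨(i : ℕ), by omega⟩ : Fin ((n - k) + k)) from rfl,
      finAddFlip_apply_mk_right (by omega) (by omega)]
    simp

private lemma glue_rot {n k : ℕ} (hk : k ≤ n) (hc : n - (n - k) = k)
    (x : Fin k → ℕ) (u : Fin (n - k) → ℕ)
    (y : Fin ((n - k) - (n - k)) → ℕ) (y' : Fin (k - k) → ℕ) :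
    glue (d := n) u y (x ∘ finCongr hc) = (glue (d := n) x y' u) ∘ (rotPerm n k hk) := by
  funext i
  have hi := i.isLt
  rcases lt_or_ge ((i : ℕ)) (n - k) with h1 | h1
  · have hσ : ((rotPerm n k hk i : Fin n) : ℕ) = k + (i : ℕ) := by
      rw [rotPerm_coe hk i, if_pos h1]
    rw [Function.comp_apply, glue_apply_lt u y _ i h1,
      glue_apply_ge (Nat.sub_self k) x y' u (rotPerm n k hk i)
        (by rw [hσ]; omega) (by rw [hσ]; omega)]
    refine congrArg u (Fin.ext ?_)
    show (i : ℕ) = ((rotPerm n k hk i : Fin n) : ℕ) - k - (k - k)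
    rw [hσ]; omega
  · have hσ : ((rotPerm n k hk i : Fin n) : ℕ) = (i : ℕ) - (n - k) := by
      rw [rotPerm_coe hk i, if_neg (by omega)]
    rw [Function.comp_apply,
      glue_apply_ge (Nat.sub_self (n - k)) u y (x ∘ finCongr hc) i (by omega) (by omega),
      glue_apply_lt x y' u (rotPerm n k hk i) (by rw [hσ]; omega), Function.comp_apply]
    refine congrArg x (Fin.ext ?_)
    show ((finCongr hc ⟨(i : ℕ) - (n - k) - ((n - k) - (n - k)), by omega⟩ : Fin k) : ℕ)
      = ((rotPerm n k hk i : Fin n) : ℕ)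
    rw [hσ]
    simp only [finCongr_apply, Fin.coe_cast]
    omega

/-- Reindexing functions along an equality of `Fin` types. -/
private def reEquiv {a b : ℕ} (h : a = b) : (Fin b → ℕ) ≃ (Fin a → ℕ) where
  toFun x := x ∘ finCongr h
  invFun s := s ∘ finCongr h.symm
  left_inv x := rfl
  right_inv s := rfl

private lemma contrNormSq_self {n k : ℕ} (hk : k ≤ n) (f : (Fin n → ℕ) → ℝ) (hfs : Symm f) :
    contrNormSq n n (n - k) (n - k) f f =
      ∑' p : (Fin k → ℕ) × (Fin k → ℕ),
        (∑' u : Fin (n - k) → ℕ,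
          f (glue p.1 ((fun _ => 0) : Fin (k - k) → ℕ) u) *
            f (glue p.2 ((fun _ => 0) : Fin (k - k) → ℕ) u)) ^ 2 := by
  have hc : n - (n - k) = k := Nat.sub_sub_self hk
  rw [contrNormSq]
  refine (tsum_triple ((fun _ => 0) : Fin ((n - k) - (n - k)) → ℕ)
      (fun z => funext fun i => absurd i.isLt (by omega)) _).trans ?_
  refine (Eq.symm (Equiv.tsum_eq (Equiv.prodCongr (reEquiv hc) (reEquiv hc))
      (fun p => (contr n n (n - k) (n - k) f f (fun _ => 0) p.1 p.2) ^ 2))).trans ?_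
  refine tsum_congr fun p => ?_
  show (contr n n (n - k) (n - k) f f (fun _ => 0)
      (p.1 ∘ finCongr hc) (p.2 ∘ finCongr hc)) ^ 2 = _
  rw [contr]
  congr 1
  refine tsum_congr fun u => ?_
  rw [glue_rot hk hc p.1 u (fun _ => 0) ((fun _ => 0) : Fin (k - k) → ℕ),
    glue_rot hk hc p.2 u (fun _ => 0) ((fun _ => 0) : Fin (k - k) → ℕ),
    hfs (rotPerm n k hk) (glue p.1 (fun _ => 0) u),
    hfs (rotPerm n k hk) (glue p.2 (fun _ => 0) u)]

end ContractionAux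

/-- Proposition 2.2, second inequality: for `0 ≤ k ≤ min(n,m)`,
`‖f ⋆_k^k g‖² ≤ ½‖f ⋆_{n-k}^{n-k} f‖² + ½‖g ⋆_{m-k}^{m-k} g‖²`. -/
theorem contraction_bound_eq {n m : ℕ}
    (f : (Fin n → ℕ) → ℝ) (g : (Fin m → ℕ) → ℝ)
    (hfs : Symm f) (hgs : Symm g)
    (hf : Summable fun i => (f i) ^ 2) (hg : Summable fun i => (g i) ^ 2)
    (k : ℕ) (hkn : k ≤ n) (hkm : k ≤ m) :
    contrNormSq n m k k f g ≤
      (1 / 2) * contrNormSq n n (n - k) (n - k) f f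
        + (1 / 2) * contrNormSq m m (m - k) (m - k) g g := by
  set F : (Fin k → ℕ) → (Fin (n - k) → ℕ) → ℝ :=
    fun x s => f (glue x ((fun _ => 0) : Fin (k - k) → ℕ) s) with hFdef
  set G : (Fin k → ℕ) → (Fin (m - k) → ℕ) → ℝ :=
    fun x t => g (glue x ((fun _ => 0) : Fin (k - k) → ℕ) t) with hGdef
  have hFinj : Function.Injective (fun p : (Fin k → ℕ) × (Fin (n - k) → ℕ) =>
      (glue p.1 ((fun _ => 0) : Fin (k - k) → ℕ) p.2 : Fin n → ℕ)) :=
    glue_injective (Nat.sub_self k) (by omega) _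
  have hGinj : Function.Injective (fun p : (Fin k → ℕ) × (Fin (m - k) → ℕ) =>
      (glue p.1 ((fun _ => 0) : Fin (k - k) → ℕ) p.2 : Fin m → ℕ)) :=
    glue_injective (Nat.sub_self k) (by omega) _
  have hFsum : Summable fun p : (Fin k → ℕ) × (Fin (n - k) → ℕ) => F p.1 p.2 ^ 2 := by
    have H := hf.comp_injective hFinj
    simpa only [Function.comp_def] using H
  have hGsum : Summable fun p : (Fin k → ℕ) × (Fin (m - k) → ℕ) => G p.1 p.2 ^ 2 := by
    have H := hg.comp_injective hGinj
    simpa only [Function.comp_def] using H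
  have hL : contrNormSq n m k k f g =
      ∑' p : (Fin (n - k) → ℕ) × (Fin (m - k) → ℕ),
        (∑' x : Fin k → ℕ, F x p.1 * G x p.2) ^ 2 := by
    rw [contrNormSq]
    refine (tsum_triple ((fun _ => 0) : Fin (k - k) → ℕ)
        (fun z => funext fun i => absurd i.isLt (by omega)) _).trans ?_
    refine tsum_congr fun p => ?_
    rw [contr]
  have hR1 : contrNormSq n n (n - k) (n - k) f f =
      ∑' p : (Fin k → ℕ) × (Fin k → ℕ),
        (∑' s : Fin (n - k) → ℕ, F p.1 s * F p.2 s) ^ 2 :=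
    (contrNormSq_self hkn f hfs).trans rfl
  have hR2 : contrNormSq m m (m - k) (m - k) g g =
      ∑' p : (Fin k → ℕ) × (Fin k → ℕ),
        (∑' t : Fin (m - k) → ℕ, G p.1 t * G p.2 t) ^ 2 :=
    (contrNormSq_self hkm g hgs).trans rfl
  rw [hL, hR1, hR2]
  exact key_contraction F G hFsum hGsum

end PaperA
end
end

section
/- Let G be a graph with v_G vertices, e_G ≥ 1 edges and no isolated vertices. There exists a constant C_G > 0 depending only on G such that for all n ≥ v_G and all integers 0 ≤ l < k ≤ e_G, the function g_k satisfies ‖g_k ⋆_k^l g_k‖²_{ℓ²(ℕ^{k−l})} = Σ_{a''∈ℕ^{k−l}} ( Σ_{a'∈ℕ^l} ( Σ_{a∈ℕ^{e_G−k}} 1_{E_G}(a,a',a'') )² )² ≤ C_G · max{ n^{4v_G − 2v_H − v_K} : K ⊆ H ⊆ G, e_K = k−l, e_H = k }, the maximum being over pairs of subgraphs K ⊆ H of G with the indicated edge counts. -/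
open MeasureTheory ProbabilityTheory Filter Finset

noncomputable section

namespace PaperC

/-- The sample space `Ω = {-1,1}^ℕ`, coded by `Bool` (`true ↦ +1`). -/
abbrev SeqSpace := ℕ → Bool

/-- The coordinate Bernoulli variables with values `±1`. -/
def Xc (k : ℕ) (ω : SeqSpace) : ℝ := if ω k then 1 else -1

/-- The centered, normalized variables `Y_k = (q - p + X_k)/(2√(pq))`. -/
def Yc (p : ℝ) (k : ℕ) (ω : SeqSpace) : ℝ :=
  ((1 - p) - p + Xc k ω) / (2 * Real.sqrt (p * (1 - p)))

/-- The discrete multiple stochastic integral of order `k`. -/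
def MI (p : ℝ) (k : ℕ) (f : (Fin k → ℕ) → ℝ) (ω : SeqSpace) : ℝ :=
  ∑' i : Fin k → ℕ, f i * ∏ j : Fin k, Yc p (i j) ω

/-- `μ` makes the coordinates i.i.d. Bernoulli with `P(X_k = 1) = p`. -/
structure IsBernoulliSeq (μ : Measure SeqSpace) (p : ℝ) : Prop where
  prob : IsProbabilityMeasure μ
  indep : iIndepFun (fun k (ω : SeqSpace) => ω k) μ
  marginal : ∀ k, μ {ω | ω k = true} = ENNReal.ofReal p

/-- Concatenation of three tuples (of announced length `d`; genuine when `d = a+b+c`). -/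
def glue {a b c d : ℕ} (x : Fin a → ℕ) (y : Fin b → ℕ) (z : Fin c → ℕ) : Fin d → ℕ :=
  fun i => if h1 : (i : ℕ) < a then x ⟨i, h1⟩
    else if h2 : (i : ℕ) - a < b then y ⟨(i : ℕ) - a, h2⟩
    else if h3 : (i : ℕ) - a - b < c then z ⟨(i : ℕ) - a - b, h3⟩ else 0

/-- The contraction `f ⋆_k^l g`. -/
def contr (n m k l : ℕ) (f : (Fin n → ℕ) → ℝ) (g : (Fin m → ℕ) → ℝ)
    (y : Fin (k - l) → ℕ) (s : Fin (n - k) → ℕ) (t : Fin (m - k) → ℕ) : ℝ :=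
  ∑' x : Fin l → ℕ, f (glue x y s) * g (glue x y t)

/-- The squared `ℓ²` norm `‖f ⋆_k^l g‖²`. -/
def contrNormSq (n m k l : ℕ) (f : (Fin n → ℕ) → ℝ) (g : (Fin m → ℕ) → ℝ) : ℝ :=
  ∑' q : (Fin (k - l) → ℕ) × (Fin (n - k) → ℕ) × (Fin (m - k) → ℕ),
    (contr n m k l f g q.1 q.2.1 q.2.2) ^ 2

/-- Concatenation of two tuples (of announced length `c`; genuine when `c = a+b`). -/
def pairGlue {a b c : ℕ} (x : Fin a → ℕ) (y : Fin b → ℕ) : Fin c → ℕ :=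
  fun i => if h1 : (i : ℕ) < a then x ⟨i, h1⟩
    else if h2 : (i : ℕ) - a < b then y ⟨(i : ℕ) - a, h2⟩ else 0

/-- `G` has no isolated vertices. -/
def NoIsolatedVertices {V : Type*} (G : SimpleGraph V) : Prop :=
  ∀ v : V, ∃ w : V, G.Adj v w

/-- `edge` enumerates the (non-diagonal) edges of the complete graph `K_n`
by the initial segment `{0, …, M-1}` of `ℕ`. -/
structure IsEdgeEnum (n : ℕ) (edge : ℕ → Sym2 (Fin n)) (M : ℕ) : Prop where
  nondiag : ∀ j, j < M → ¬ (edge j).IsDiag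
  inj : ∀ j1, j1 < M → ∀ j2, j2 < M → edge j1 = edge j2 → j1 = j2
  surj : ∀ e : Sym2 (Fin n), ¬ e.IsDiag → ∃ j, j < M ∧ edge j = e

/-- `E_G ⊆ ℕ^{e_G}`: tuples of indices of pairwise distinct edges of `K_n`
whose union forms a graph isomorphic to `G`. -/
def EGset {V : Type*} (G : SimpleGraph V) (n : ℕ) (edge : ℕ → Sym2 (Fin n))
    (M eG : ℕ) : Set (Fin eG → ℕ) :=
  {b | Function.Injective b ∧ (∀ i, b i < M) ∧
    ∃ φ : V ↪ Fin n, (Set.range fun i => edge (b i)) = Sym2.map φ '' G.edgeSet}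

/-- `g_k(b) = Σ_{a ∈ ℕ^{e_G - k}} 1_{E_G}(a, b)`. -/
def gker {V : Type*} (G : SimpleGraph V) (n : ℕ) (edge : ℕ → Sym2 (Fin n))
    (M eG k : ℕ) (b : Fin k → ℕ) : ℝ :=
  ∑' a : Fin (eG - k) → ℕ,
    (EGset G n edge M eG).indicator (fun _ => (1 : ℝ)) (pairGlue a b)

/-- `N_G^n(ω)`: the number of subgraphs of the realized random graph isomorphic
to `G`, counted as index sets of edge subsets forming a copy of `G`. -/
def NGcount {V : Type*} (G : SimpleGraph V) (n : ℕ) (edge : ℕ → Sym2 (Fin n))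
    (M eG : ℕ) (ω : SeqSpace) : ℕ :=
  Nat.card {S : Set ℕ //
    (∃ b : Fin eG → ℕ, b ∈ EGset G n edge M eG ∧ S = Set.range b) ∧
    ∀ j ∈ S, ω j = true}


section Aux

open Finset

/-! ### Gluing lemmas -/

lemma pairGlue_val_left {a b c : ℕ} (x : Fin a → ℕ) (y : Fin b → ℕ) (v : ℕ) (hv : v < c)
    (h : v < a) : (pairGlue x y : Fin c → ℕ) ⟨v, hv⟩ = x ⟨v, h⟩ := by
  simp [pairGlue, h]

lemma pairGlue_val_right {a b c : ℕ} (x : Fin a → ℕ) (y : Fin b → ℕ) (v : ℕ) (hv : v < c)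
    (ha : a ≤ v) (h : v - a < b) : (pairGlue x y : Fin c → ℕ) ⟨v, hv⟩ = y ⟨v - a, h⟩ := by
  simp only [pairGlue]
  rw [dif_neg (by omega), dif_pos (by omega)]

lemma glue_eq_pairGlue {a b c d : ℕ} (h : d ≤ a + b) (x : Fin a → ℕ) (y : Fin b → ℕ)
    (z : Fin c → ℕ) : (glue x y z : Fin d → ℕ) = pairGlue x y := by
  funext i
  have hi := i.2
  by_cases h1 : (i : ℕ) < a
  · simp [glue, pairGlue, h1]
  · have h2 : (i : ℕ) - a < b := by omega
    simp [glue, pairGlue, h1, h2]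

lemma pairGlue_assoc {p q r s e m : ℕ} (hr : p + q = r) (hm : q + s = m) (he : r + s = e)
    (a : Fin p → ℕ) (x : Fin q → ℕ) (y : Fin s → ℕ) :
    (pairGlue (pairGlue a x : Fin r → ℕ) y : Fin e → ℕ)
      = (pairGlue a (pairGlue x y : Fin m → ℕ) : Fin e → ℕ) := by
  funext i
  have hi := i.2
  simp only [pairGlue]
  split_ifs <;> first
    | rfl
    | omega
    | (congr 1; apply Fin.ext; simp; omega)

lemma pairGlue_self {a c : ℕ} (h : c ≤ a) (x : Fin a → ℕ) (y : Fin 0 → ℕ) (i : Fin c) :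
    (pairGlue x y : Fin c → ℕ) i = x ⟨(i : ℕ), lt_of_lt_of_le i.2 h⟩ := by
  have hi : (i : ℕ) < a := lt_of_lt_of_le i.2 h
  simp [pairGlue, hi]

/-- The finite cube `{0,…,M-1}^j`. -/
def TT (M j : ℕ) : Finset (Fin j → ℕ) := Fintype.piFinset fun _ => Finset.range M

lemma mem_TT {M j : ℕ} {f : Fin j → ℕ} : f ∈ TT M j ↔ ∀ i, f i < M := by
  simp [TT, Fintype.mem_piFinset]

/-- Tail positions. -/
def tpos (eG j : ℕ) (hj : j ≤ eG) (i : Fin j) : Fin eG :=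
  ⟨eG - j + i, by have := i.2; omega⟩

lemma pairGlue_tpos {eG j : ℕ} (hj : j ≤ eG) (a : Fin (eG - j) → ℕ) (t : Fin j → ℕ)
    (i : Fin j) : (pairGlue a t : Fin eG → ℕ) (tpos eG j hj i) = t i := by
  have hi := i.2
  rw [show tpos eG j hj i = ⟨eG - j + (i : ℕ), by omega⟩ from rfl]
  rw [pairGlue_val_right a t _ _ (by omega) (by omega)]
  congr 1
  apply Fin.ext
  simp

/-! ### Basic facts about `gker` -/

variable {V : Type} [Fintype V] (G : SimpleGraph V) (n : ℕ) (edge : ℕ → Sym2 (Fin n))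
  (M eG : ℕ)

lemma gker_eq_sum {k : ℕ} (t : Fin k → ℕ) :
    gker G n edge M eG k t =
      ∑ a ∈ TT M (eG - k), (EGset G n edge M eG).indicator (fun _ => (1 : ℝ)) (pairGlue a t) := by
  refine tsum_eq_sum ?_
  intro a ha
  rw [mem_TT] at ha
  push_neg at ha
  obtain ⟨i, hi⟩ := ha
  refine Set.indicator_of_notMem ?_ _
  rintro ⟨-, hlt, -⟩
  have lt1 : (i : ℕ) < eG := lt_of_lt_of_le i.2 (Nat.sub_le _ _)
  have h2 := hlt ⟨(i : ℕ), lt1⟩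
  rw [pairGlue_val_left a t _ _ i.2] at h2
  simp only [Fin.eta] at h2
  omega

lemma gker_nonneg {k : ℕ} (t : Fin k → ℕ) : 0 ≤ gker G n edge M eG k t := by
  rw [gker_eq_sum]
  exact Finset.sum_nonneg fun a _ => Set.indicator_nonneg (fun _ _ => zero_le_one) _

lemma gker_eq_zero {k : ℕ} (hk : k ≤ eG) (t : Fin k → ℕ) (i : Fin k) (hge : M ≤ t i) :
    gker G n edge M eG k t = 0 := by
  rw [gker_eq_sum]
  refine Finset.sum_eq_zero fun a _ => ?_
  refine Set.indicator_of_notMem ?_ _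
  rintro ⟨-, hlt, -⟩
  have h2 := hlt (tpos eG k hk i)
  rw [pairGlue_tpos hk a t i] at h2
  omega

/-- Reindexing a sum over a cube as a double sum via `pairGlue`. -/
lemma sum_pairGlue {p q c : ℕ} (h : p + q = c) (F : (Fin c → ℕ) → ℝ) :
    ∑ z ∈ TT M c, F z = ∑ a ∈ TT M p, ∑ x ∈ TT M q, F (pairGlue a x) := by
  have hglue : ∀ z : Fin c → ℕ, (pairGlue (fun i : Fin p => z ⟨i, by have := i.2; omega⟩)
      (fun i : Fin q => z ⟨p + i, by have := i.2; omega⟩) : Fin c → ℕ) = z := by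
    intro z
    funext i
    have hi := i.2
    rw [show i = ⟨(i : ℕ), i.2⟩ from rfl]
    by_cases h1 : (i : ℕ) < p
    · rw [pairGlue_val_left _ _ _ _ h1]
    · rw [pairGlue_val_right _ _ _ _ (by omega) (by omega)]
      congr 1
      apply Fin.ext
      simp
      omega
  rw [← Finset.sum_product']
  refine (Finset.sum_nbij' (fun z => ((fun i : Fin p => z ⟨i, by have := i.2; omega⟩),
      (fun i : Fin q => z ⟨p + i, by have := i.2; omega⟩)))
    (fun ax => pairGlue ax.1 ax.2) ?_ ?_ ?_ ?_ ?_)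
  · intro z hz
    rw [mem_TT] at hz
    simp only [Finset.mem_product, mem_TT]
    exact ⟨fun i => hz _, fun i => hz _⟩
  · intro ax hax
    rw [Finset.mem_product, mem_TT, mem_TT] at hax
    rw [mem_TT]
    intro i
    rw [show i = ⟨(i : ℕ), i.2⟩ from rfl]
    have hi := i.2
    by_cases h1 : (i : ℕ) < p
    · rw [pairGlue_val_left _ _ _ _ h1]; exact hax.1 _
    · rw [pairGlue_val_right _ _ _ _ (by omega) (by omega)]; exact hax.2 _
  · intro z hz
    exact hglue z
  · intro ax hax
    apply Prod.ext
    · funext i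
      have hi := i.2
      simp only
      rw [pairGlue_val_left _ _ _ _ (by omega : (i : ℕ) < p)]
    · funext i
      have hi := i.2
      simp only
      rw [pairGlue_val_right _ _ _ _ (by omega) (by omega)]
      have he : (⟨p + (i : ℕ) - p, by omega⟩ : Fin q) = i := Fin.ext (by simp)
      rw [he]
  · intro z hz
    rw [hglue z]

/-- Summing out the first block of variables of `gker`. -/
lemma gker_sum_out {d j1 j2 : ℕ} (h : d + j1 = j2) (hj2 : j2 ≤ eG) (y : Fin j1 → ℕ) :
    ∑ x ∈ TT M d, gker G n edge M eG j2 (pairGlue x y) = gker G n edge M eG j1 y := by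
  have h1 : eG - j2 + d = eG - j1 := by omega
  have h2 : (eG - j1) + j1 = eG := by omega
  rw [gker_eq_sum G n edge M eG y, sum_pairGlue M h1]
  rw [Finset.sum_congr rfl fun x hx => gker_eq_sum G n edge M eG (pairGlue x y)]
  rw [Finset.sum_comm]
  refine Finset.sum_congr rfl fun a _ => Finset.sum_congr rfl fun x _ => ?_
  rw [pairGlue_assoc h1 h h2 a x y]

/-! ### Support counts and the structure of `EGset` -/

open Classical in
/-- Vertex support of a tuple of edge indices. -/
def Sfin (j : ℕ) (t : Fin j → ℕ) : Finset (Fin n) :=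
  Finset.univ.filter fun u => ∃ i : Fin j, u ∈ edge (t i)

/-- Number of vertices in the support of a tuple of edge indices. -/
def sfun (j : ℕ) (t : Fin j → ℕ) : ℕ := (Sfin n edge j t).card

lemma EGset_struct (henum : IsEdgeEnum n edge M) {b : Fin eG → ℕ}
    (hb : b ∈ EGset G n edge M eG) :
    ∃ (φ : V ↪ Fin n) (σ : Fin eG → Sym2 V),
      (∀ i, σ i ∈ G.edgeSet) ∧ (∀ i, Sym2.map φ (σ i) = edge (b i)) := by
  obtain ⟨hinj, hlt, φ, hφ⟩ := hb
  refine ⟨φ, ?_⟩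
  have h : ∀ i : Fin eG, ∃ e : Sym2 V, e ∈ G.edgeSet ∧ Sym2.map φ e = edge (b i) := by
    intro i
    have h2 : edge (b i) ∈ Sym2.map φ '' G.edgeSet := by
      rw [← hφ]; exact ⟨i, rfl⟩
    obtain ⟨e, he, hee⟩ := h2
    exact ⟨e, he, hee⟩
  choose σ h1 h2 using h
  exact ⟨σ, h1, h2⟩

open Classical in
/-- The set of vertices of `G` used by the edges in the tail positions. -/
def KV {eG : ℕ} (j : ℕ) (hj : j ≤ eG) (σ : Fin eG → Sym2 V) : Finset V :=
  Finset.univ.filter fun v => ∃ i : Fin j, v ∈ σ (tpos eG j hj i)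

lemma image_KV {eG j : ℕ} (hj : j ≤ eG) (φ : V ↪ Fin n) (σ : Fin eG → Sym2 V)
    (t : Fin j → ℕ) (hσt : ∀ i : Fin j, Sym2.map φ (σ (tpos eG j hj i)) = edge (t i)) :
    Finset.image φ (KV j hj σ) = Sfin n edge j t := by
  classical
  ext u
  simp only [Finset.mem_image, KV, Sfin, Finset.mem_filter, Finset.mem_univ, true_and]
  constructor
  · rintro ⟨v, ⟨i, hv⟩, rfl⟩
    exact ⟨i, by rw [← hσt i]; exact Sym2.mem_map.2 ⟨v, hv, rfl⟩⟩
  · rintro ⟨i, hu⟩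
    rw [← hσt i] at hu
    obtain ⟨v, hv, rfl⟩ := Sym2.mem_map.1 hu
    exact ⟨v, ⟨i, hv⟩, rfl⟩

lemma card_KV {eG j : ℕ} (hj : j ≤ eG) (φ : V ↪ Fin n) (σ : Fin eG → Sym2 V)
    (t : Fin j → ℕ) (hσt : ∀ i : Fin j, Sym2.map φ (σ (tpos eG j hj i)) = edge (t i)) :
    (KV j hj σ).card = sfun n edge j t := by
  classical
  rw [← Finset.card_image_of_injective (KV j hj σ) φ.injective,
    image_KV n edge hj φ σ t hσt]
  rfl

/-! ### The counting bound for `gker` -/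

lemma gker_le (henum : IsEdgeEnum n edge M) {j : ℕ} (hj : j ≤ eG) (hn : 0 < n)
    (t : Fin j → ℕ) :
    gker G n edge M eG j t ≤
      ((Fintype.card (Sym2 V) : ℝ) ^ eG * (Fintype.card V : ℝ) ^ Fintype.card V) *
        (n : ℝ) ^ ((Fintype.card V : ℤ) - (sfun n edge j t : ℤ)) := by
  classical
  have hgk : gker G n edge M eG j t =
      (((TT M (eG - j)).filter fun a =>
        (pairGlue a t : Fin eG → ℕ) ∈ EGset G n edge M eG).card : ℝ) := by
    rw [gker_eq_sum]
    rw [Finset.sum_congr rfl fun a _ => Set.indicator_apply _ _ _]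
    rw [Finset.sum_boole]
  by_cases hne : ((TT M (eG - j)).filter fun a =>
      (pairGlue a t : Fin eG → ℕ) ∈ EGset G n edge M eG).Nonempty
  swap
  · rw [hgk, Finset.not_nonempty_iff_eq_empty.1 hne]
    simp only [Finset.card_empty, Nat.cast_zero]
    positivity
  obtain ⟨a₀, ha₀⟩ := hne
  have ha₀' := (Finset.mem_filter.1 ha₀).2
  obtain ⟨φ₀, σ₀, hσ₀E, hσ₀e⟩ := EGset_struct G n edge M eG henum ha₀'
  haveI hNE : Nonempty ((_ : Fin eG → Sym2 V) × (V → Fin n)) := ⟨⟨σ₀, fun v => φ₀ v⟩⟩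
  set s := sfun n edge j t with hs
  have hσ₀t : ∀ i : Fin j, Sym2.map φ₀ (σ₀ (tpos eG j hj i)) = edge (t i) := by
    intro i
    rw [hσ₀e (tpos eG j hj i), pairGlue_tpos hj a₀ t i]
  have hsle : s ≤ Fintype.card V := by
    rw [hs, ← card_KV n edge hj φ₀ σ₀ t hσ₀t]
    exact Finset.card_le_card (Finset.filter_subset _ _) |>.trans_eq (Finset.card_univ)
  -- the target finset
  set TGT : Finset ((_ : Fin eG → Sym2 V) × (V → Fin n)) :=
    (Finset.univ.filter fun σ : Fin eG → Sym2 V => (KV j hj σ).card = s).sigma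
      (fun σ => Fintype.piFinset fun v =>
        if v ∈ KV j hj σ then Sfin n edge j t else Finset.univ) with hTGT
  -- the injection
  have hcho : ∀ a : Fin (eG - j) → ℕ, (pairGlue a t : Fin eG → ℕ) ∈ EGset G n edge M eG →
      ∃ (φ : V ↪ Fin n) (σ : Fin eG → Sym2 V),
        (∀ i, σ i ∈ G.edgeSet) ∧
          (∀ i, Sym2.map φ (σ i) = edge ((pairGlue a t : Fin eG → ℕ) i)) :=
    fun a ha => EGset_struct G n edge M eG henum ha
  set F : (Fin (eG - j) → ℕ) → ((_ : Fin eG → Sym2 V) × (V → Fin n)) := fun a =>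
    if h : (pairGlue a t : Fin eG → ℕ) ∈ EGset G n edge M eG then
      ⟨(hcho a h).choose_spec.choose, fun v => (hcho a h).choose v⟩
    else Classical.arbitrary _
  have hcard : ((TT M (eG - j)).filter fun a =>
      (pairGlue a t : Fin eG → ℕ) ∈ EGset G n edge M eG).card ≤ TGT.card := by
    refine Finset.card_le_card_of_injOn F ?_ ?_
    · intro a ha
      have hmem := (Finset.mem_filter.1 ha).2
      have hF : F a = ⟨(hcho a hmem).choose_spec.choose, fun v => (hcho a hmem).choose v⟩ :=
        dif_pos hmem
      rw [hF, hTGT, Finset.mem_coe, Finset.mem_sigma]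
      obtain ⟨hσE, hσe⟩ := (hcho a hmem).choose_spec.choose_spec
      set φ := (hcho a hmem).choose
      set σ := (hcho a hmem).choose_spec.choose
      have hσt : ∀ i : Fin j, Sym2.map φ (σ (tpos eG j hj i)) = edge (t i) := by
        intro i
        rw [hσe (tpos eG j hj i), pairGlue_tpos hj a t i]
      constructor
      · rw [Finset.mem_filter]
        exact ⟨Finset.mem_univ _, card_KV n edge hj φ σ t hσt⟩
      · rw [Fintype.mem_piFinset]
        intro v
        by_cases hv : v ∈ KV j hj σ
        · rw [if_pos hv]
          obtain ⟨i, hvi⟩ := (Finset.mem_filter.1 hv).2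
          simp only [Sfin, Finset.mem_filter, Finset.mem_univ, true_and]
          exact ⟨i, by rw [← hσt i]; exact Sym2.mem_map.2 ⟨v, hvi, rfl⟩⟩
        · rw [if_neg hv]; exact Finset.mem_univ _
    · intro a1 h1 a2 h2 hF
      simp only [Finset.coe_filter, Set.mem_setOf_eq] at h1 h2
      have hm1 := h1.2
      have hm2 := h2.2
      rw [show F a1 = ⟨(hcho a1 hm1).choose_spec.choose, fun v => (hcho a1 hm1).choose v⟩
          from dif_pos hm1,
        show F a2 = ⟨(hcho a2 hm2).choose_spec.choose, fun v => (hcho a2 hm2).choose v⟩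
          from dif_pos hm2] at hF
      have hσeq : (hcho a1 hm1).choose_spec.choose = (hcho a2 hm2).choose_spec.choose :=
        congrArg Sigma.fst hF
      have hφeq : (fun v => (hcho a1 hm1).choose v) = (fun v => (hcho a2 hm2).choose v) := by
        have := (Sigma.mk.inj_iff.1 hF).2
        exact eq_of_heq this
      obtain ⟨hσE1, hσe1⟩ := (hcho a1 hm1).choose_spec.choose_spec
      obtain ⟨hσE2, hσe2⟩ := (hcho a2 hm2).choose_spec.choose_spec
      have hbeq : (pairGlue a1 t : Fin eG → ℕ) = (pairGlue a2 t : Fin eG → ℕ) := by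
        funext i
        have he1 := hσe1 i
        have he2 := hσe2 i
        rw [hσeq] at he1
        have hmapeq : Sym2.map (hcho a1 hm1).choose ((hcho a2 hm2).choose_spec.choose i)
            = Sym2.map (hcho a2 hm2).choose ((hcho a2 hm2).choose_spec.choose i) := by
          have : ((hcho a1 hm1).choose : V → Fin n) = ((hcho a2 hm2).choose : V → Fin n) := hφeq
          rw [this]
        rw [hmapeq, he2] at he1
        exact henum.inj _ (hm1.2.1 i) _ (hm2.2.1 i) he1.symm
      funext i
      have lt1 : (i : ℕ) < eG := lt_of_lt_of_le i.2 (Nat.sub_le _ _)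
      have := congrFun hbeq ⟨(i : ℕ), lt1⟩
      rw [pairGlue_val_left a1 t _ _ i.2, pairGlue_val_left a2 t _ _ i.2] at this
      simpa only [Fin.eta] using this
  -- cardinality of the target
  have hfiber : ∀ σ ∈ Finset.univ.filter fun σ : Fin eG → Sym2 V => (KV j hj σ).card = s,
      (Fintype.piFinset fun v =>
        if v ∈ KV j hj σ then Sfin n edge j t else (Finset.univ : Finset (Fin n))).card
        = s ^ s * n ^ (Fintype.card V - s) := by
    intro σ hσ
    have hKVs : (KV j hj σ).card = s := (Finset.mem_filter.1 hσ).2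
    rw [Fintype.card_piFinset]
    have hc : ∀ v : V, (if v ∈ KV j hj σ then Sfin n edge j t
        else (Finset.univ : Finset (Fin n))).card
        = if v ∈ KV j hj σ then s else n := by
      intro v
      by_cases hv : v ∈ KV j hj σ <;> simp [hv, Finset.card_univ, hs, sfun]
    rw [Finset.prod_congr rfl fun v _ => hc v, Finset.prod_ite, Finset.prod_const,
      Finset.prod_const]
    have h1 : (Finset.univ.filter fun v => v ∈ KV j hj σ) = KV j hj σ := by
      rw [Finset.filter_mem_eq_inter, Finset.univ_inter]
    have h2 : (Finset.univ.filter fun v => ¬ v ∈ KV j hj σ).card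
        = Fintype.card V - s := by
      rw [Finset.filter_not, Finset.filter_mem_eq_inter, Finset.univ_inter,
        Finset.card_sdiff_of_subset (Finset.subset_univ _), Finset.card_univ, hKVs]
    rw [h1, h2, hKVs]
  have hpow1 : s ^ s * n ^ (Fintype.card V - s) ≤
      (Fintype.card V) ^ (Fintype.card V) * n ^ (Fintype.card V - s) := by
    refine Nat.mul_le_mul_right _ ?_
    rcases Nat.eq_zero_or_pos (Fintype.card V) with h | h
    · have : s = 0 := by omega
      simp [this, h]
    · calc s ^ s ≤ (Fintype.card V) ^ s := Nat.pow_le_pow_left hsle _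
        _ ≤ (Fintype.card V) ^ (Fintype.card V) := Nat.pow_le_pow_right h hsle
  have hcard1 : (Finset.univ.filter fun σ : Fin eG → Sym2 V => (KV j hj σ).card = s).card
      ≤ (Fintype.card (Sym2 V)) ^ eG := by
    calc (Finset.univ.filter fun σ : Fin eG → Sym2 V => (KV j hj σ).card = s).card
        ≤ (Finset.univ : Finset (Fin eG → Sym2 V)).card :=
          Finset.card_le_card (Finset.filter_subset _ _)
      _ = (Fintype.card (Sym2 V)) ^ eG := by
          rw [Finset.card_univ, Fintype.card_fun, Fintype.card_fin]
  have hTn : TGT.card ≤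
      (Fintype.card (Sym2 V)) ^ eG *
        ((Fintype.card V) ^ (Fintype.card V) * n ^ (Fintype.card V - s)) := by
    rw [hTGT, Finset.card_sigma, Finset.sum_congr rfl hfiber, Finset.sum_const,
      smul_eq_mul]
    exact Nat.mul_le_mul hcard1 hpow1
  have hzp : ((n : ℝ)) ^ ((Fintype.card V : ℤ) - (s : ℤ))
      = (n : ℝ) ^ (Fintype.card V - s) := by
    rw [show (Fintype.card V : ℤ) - (s : ℤ) = ((Fintype.card V - s : ℕ) : ℤ) by omega,
      zpow_natCast]
  rw [hgk, hzp]
  calc (((TT M (eG - j)).filter fun a =>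
      (pairGlue a t : Fin eG → ℕ) ∈ EGset G n edge M eG).card : ℝ)
      ≤ (TGT.card : ℝ) := by exact_mod_cast hcard
    _ ≤ (((Fintype.card (Sym2 V)) ^ eG *
        ((Fintype.card V) ^ (Fintype.card V) * n ^ (Fintype.card V - s)) : ℕ) : ℝ) := by
        exact_mod_cast hTn
    _ = _ := by push_cast; ring

/-! ### Subgraphs spanned by a family of edges -/

/-- The subgraph of `G` spanned by a family of edges of `G`. -/
def rangeSub {m : ℕ} (ee : Fin m → Sym2 V) (hE' : ∀ i, ee i ∈ G.edgeSet) : G.Subgraph where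
  verts := {v | ∃ i, v ∈ ee i}
  Adj u v := ∃ i, ee i = s(u, v)
  adj_sub := by
    rintro u v ⟨i, h⟩
    exact (SimpleGraph.mem_edgeSet G).1 (h ▸ hE' i)
  edge_vert := by
    rintro u v ⟨i, h⟩
    exact ⟨i, by rw [h]; exact Sym2.mem_mk_left u v⟩
  symm := by
    constructor
    rintro u v ⟨i, h⟩
    exact ⟨i, h.trans (Sym2.eq_swap)⟩

lemma rangeSub_edgeSet {m : ℕ} (ee : Fin m → Sym2 V) (hE' : ∀ i, ee i ∈ G.edgeSet) :
    (rangeSub G ee hE').edgeSet = Set.range ee := by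
  ext e
  induction e using Sym2.ind with
  | _ u v =>
    rw [SimpleGraph.Subgraph.mem_edgeSet]
    exact ⟨fun ⟨i, h⟩ => ⟨i, h⟩, fun ⟨i, h⟩ => ⟨i, h⟩⟩

lemma rangeSub_edgeSet_ncard {m : ℕ} (ee : Fin m → Sym2 V) (hE' : ∀ i, ee i ∈ G.edgeSet)
    (hinj : Function.Injective ee) : (rangeSub G ee hE').edgeSet.ncard = m := by
  rw [rangeSub_edgeSet, ← Set.image_univ, Set.ncard_image_of_injective _ hinj,
    Set.ncard_univ, Nat.card_eq_fintype_card, Fintype.card_fin]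

lemma rangeSub_verts_ncard {j : ℕ} (ee : Fin j → Sym2 V) (hE' : ∀ i, ee i ∈ G.edgeSet)
    (t : Fin j → ℕ) (φ : V ↪ Fin n)
    (hmap : ∀ i : Fin j, Sym2.map φ (ee i) = edge (t i)) :
    (rangeSub G ee hE').verts.ncard = sfun n edge j t := by
  classical
  have him : (φ : V → Fin n) '' (rangeSub G ee hE').verts = ↑(Sfin n edge j t) := by
    ext u
    simp only [Set.mem_image, rangeSub, Set.mem_setOf_eq, Finset.coe_filter, Sfin,
      Finset.mem_univ, true_and, Set.mem_setOf_eq]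
    constructor
    · rintro ⟨v, ⟨i, hv⟩, rfl⟩
      refine ⟨i, ?_⟩
      rw [← hmap i]
      exact Sym2.mem_map.2 ⟨v, hv, rfl⟩
    · rintro ⟨i, hu⟩
      rw [← hmap i] at hu
      obtain ⟨v, hv, rfl⟩ := Sym2.mem_map.1 hu
      exact ⟨v, ⟨i, hv⟩, rfl⟩
  have h2 := Set.ncard_image_of_injective (rangeSub G ee hE').verts φ.injective
  rw [him] at h2
  rw [← h2, Set.ncard_coe_finset]
  rfl

/-- Existence of the pair of subgraphs `K ≤ H` attached to a witness in `EGset`. -/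
lemma exists_pair (henum : IsEdgeEnum n edge M) {k l : ℕ} (hk : k ≤ eG) (hlk : l ≤ k)
    {x : Fin l → ℕ} {y : Fin (k - l) → ℕ} {a : Fin (eG - k) → ℕ}
    (hb : (pairGlue a (pairGlue x y : Fin k → ℕ) : Fin eG → ℕ) ∈ EGset G n edge M eG) :
    ∃ P : G.Subgraph × G.Subgraph, P.1 ≤ P.2 ∧ P.1.edgeSet.ncard = k - l ∧
      P.2.edgeSet.ncard = k ∧
      P.2.verts.ncard = sfun n edge k (pairGlue x y) ∧
      P.1.verts.ncard = sfun n edge (k - l) y := by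
  have hkl : k - l ≤ eG := le_trans (Nat.sub_le _ _) hk
  have hblt := hb.2.1
  have hbinj := hb.1
  obtain ⟨φ, σ, hσE, hσe⟩ := EGset_struct G n edge M eG henum hb
  -- The alternative decomposition of b with tail y
  have hassoc : (pairGlue (pairGlue a x : Fin (eG - (k - l)) → ℕ) y : Fin eG → ℕ)
      = (pairGlue a (pairGlue x y : Fin k → ℕ) : Fin eG → ℕ) :=
    pairGlue_assoc (by omega) (by omega) (by omega) a x y
  set eH : Fin k → Sym2 V := fun i => σ (tpos eG k hk i) with heH
  set eK : Fin (k - l) → Sym2 V := fun i => σ (tpos eG (k - l) hkl i) with heK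
  have hmapH : ∀ i : Fin k, Sym2.map φ (eH i) = edge ((pairGlue x y : Fin k → ℕ) i) := by
    intro i
    rw [heH, hσe (tpos eG k hk i), pairGlue_tpos hk a (pairGlue x y) i]
  have hmapK : ∀ i : Fin (k - l), Sym2.map φ (eK i) = edge (y i) := by
    intro i
    rw [heK, hσe (tpos eG (k - l) hkl i), ← hassoc,
      pairGlue_tpos hkl (pairGlue a x) y i]
  have hbltH : ∀ i : Fin k, (pairGlue x y : Fin k → ℕ) i < M := by
    intro i
    have h2 := hblt (tpos eG k hk i)
    rwa [pairGlue_tpos hk a (pairGlue x y) i] at h2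
  have hblty : ∀ i : Fin (k - l), y i < M := by
    intro i
    have h2 := hblt (tpos eG (k - l) hkl i)
    rwa [← hassoc, pairGlue_tpos hkl (pairGlue a x) y i] at h2
  have hinjH : Function.Injective eH := by
    intro i1 i2 h
    have h2 : edge ((pairGlue x y : Fin k → ℕ) i1) = edge ((pairGlue x y : Fin k → ℕ) i2) := by
      rw [← hmapH i1, ← hmapH i2, h]
    have h3 := henum.inj _ (hbltH i1) _ (hbltH i2) h2
    have h4 : (pairGlue a (pairGlue x y : Fin k → ℕ) : Fin eG → ℕ) (tpos eG k hk i1)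
        = (pairGlue a (pairGlue x y : Fin k → ℕ) : Fin eG → ℕ) (tpos eG k hk i2) := by
      rw [pairGlue_tpos hk a (pairGlue x y) i1, pairGlue_tpos hk a (pairGlue x y) i2, h3]
    have h5 := hbinj h4
    have h6 : (tpos eG k hk i1 : ℕ) = (tpos eG k hk i2 : ℕ) := by rw [h5]
    simp only [tpos] at h6
    exact Fin.ext (by omega)
  have hinjK : Function.Injective eK := by
    intro i1 i2 h
    have h2 : edge (y i1) = edge (y i2) := by
      rw [← hmapK i1, ← hmapK i2, h]
    have h3 := henum.inj _ (hblty i1) _ (hblty i2) h2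
    have h4 : (pairGlue (pairGlue a x : Fin (eG - (k - l)) → ℕ) y : Fin eG → ℕ)
        (tpos eG (k - l) hkl i1)
        = (pairGlue (pairGlue a x : Fin (eG - (k - l)) → ℕ) y : Fin eG → ℕ)
          (tpos eG (k - l) hkl i2) := by
      rw [pairGlue_tpos hkl (pairGlue a x) y i1, pairGlue_tpos hkl (pairGlue a x) y i2, h3]
    rw [hassoc] at h4
    have h5 := hbinj h4
    have h6 : (tpos eG (k - l) hkl i1 : ℕ) = (tpos eG (k - l) hkl i2 : ℕ) := by rw [h5]
    simp only [tpos] at h6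
    exact Fin.ext (by omega)
  have hKsubH : ∀ i : Fin (k - l), eK i = eH ⟨l + (i : ℕ), by have := i.2; omega⟩ := by
    intro i
    show σ (tpos eG (k - l) hkl i) = σ (tpos eG k hk ⟨l + (i : ℕ), by have := i.2; omega⟩)
    congr 1
    apply Fin.ext
    simp only [tpos]
    have := i.2
    omega
  have hKmem : ∀ i : Fin (k - l), eK i ∈ G.edgeSet := fun i => hσE (tpos eG (k - l) hkl i)
  have hHmem : ∀ i : Fin k, eH i ∈ G.edgeSet := fun i => hσE (tpos eG k hk i)
  refine ⟨(rangeSub G eK hKmem, rangeSub G eH hHmem), ?_, ?_, ?_, ?_, ?_⟩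
  · constructor
    · rintro v ⟨i, hv⟩
      exact ⟨⟨l + (i : ℕ), by have := i.2; omega⟩, by rw [← hKsubH i]; exact hv⟩
    · rintro u v ⟨i, hv⟩
      exact ⟨⟨l + (i : ℕ), by have := i.2; omega⟩, by rw [← hKsubH i]; exact hv⟩
  · exact rangeSub_edgeSet_ncard G eK hKmem hinjK
  · exact rangeSub_edgeSet_ncard G eH hHmem hinjH
  · exact rangeSub_verts_ncard G n edge eH hHmem (pairGlue x y) φ (fun i => hmapH i)
  · exact rangeSub_verts_ncard G n edge eK hKmem y φ (fun i => hmapK i)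

/-- Subgraphs of a graph on a finite vertex type form a finite type. -/
lemma subgraph_finite : Finite G.Subgraph := by
  have hinj : Function.Injective
      (fun H : G.Subgraph => (H.verts, H.Adj) : G.Subgraph → Set V × (V → V → Prop)) := by
    intro H1 H2 h
    exact SimpleGraph.Subgraph.ext (congrArg Prod.fst h) (congrArg Prod.snd h)
  exact Finite.of_injective _ hinj

/-! ### Reduction of `contrNormSq` to finite sums -/

lemma contrNormSq_eq {k l : ℕ} (hlk : l ≤ k) (hk : k ≤ eG) :
    contrNormSq k k k l (gker G n edge M eG k) (gker G n edge M eG k) =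
      ∑ y ∈ TT M (k - l),
        (∑ x ∈ TT M l, gker G n edge M eG k (pairGlue x y) ^ 2) ^ 2 := by
  classical
  haveI : IsEmpty (Fin (k - k)) := by rw [Nat.sub_self]; infer_instance
  have hg : ∀ (x : Fin l → ℕ) (yy : Fin (k - l) → ℕ) (z : Fin (k - k) → ℕ),
      (glue x yy z : Fin k → ℕ) = pairGlue x yy := fun x yy z =>
    glue_eq_pairGlue (by omega) x yy z
  have hcontr : ∀ (yy : Fin (k - l) → ℕ) (st : Fin (k - k) → ℕ) (tt : Fin (k - k) → ℕ),
      contr k k k l (gker G n edge M eG k) (gker G n edge M eG k) yy st tt =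
        ∑ x ∈ TT M l, gker G n edge M eG k (pairGlue x yy) ^ 2 := by
    intro yy st tt
    unfold contr
    rw [tsum_congr (fun x => by rw [hg x yy st, hg x yy tt, ← sq])]
    refine tsum_eq_sum ?_
    intro x hx
    rw [mem_TT] at hx
    push_neg at hx
    obtain ⟨i, hi⟩ := hx
    have hzero : gker G n edge M eG k (pairGlue x yy) = 0 := by
      refine gker_eq_zero G n edge M eG hk _ ⟨(i : ℕ), by have := i.2; omega⟩ ?_
      rw [pairGlue_val_left x yy _ _ i.2]
      simpa only [Fin.eta] using hi
    rw [hzero]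
    ring
  have hczero : ∀ (yy : Fin (k - l) → ℕ), yy ∉ TT M (k - l) →
      ∀ (st : Fin (k - k) → ℕ) (tt : Fin (k - k) → ℕ),
      contr k k k l (gker G n edge M eG k) (gker G n edge M eG k) yy st tt = 0 := by
    intro yy hyy st tt
    rw [hcontr yy st tt]
    refine Finset.sum_eq_zero fun x _ => ?_
    rw [mem_TT] at hyy
    push_neg at hyy
    obtain ⟨i, hi⟩ := hyy
    have hzero : gker G n edge M eG k (pairGlue x yy) = 0 := by
      refine gker_eq_zero G n edge M eG hk _ ⟨l + (i : ℕ), by have := i.2; omega⟩ ?_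
      rw [pairGlue_val_right x yy _ _ (by omega) (by have := i.2; omega)]
      have he : (⟨l + (i : ℕ) - l, by have := i.2; omega⟩ : Fin (k - l)) = i :=
        Fin.ext (by simp)
      rw [he]
      exact hi
    rw [hzero]
    ring
  unfold contrNormSq
  rw [tsum_eq_sum (s := (TT M (k - l)) ×ˢ ((Finset.univ : Finset (Fin (k - k) → ℕ)) ×ˢ
      (Finset.univ : Finset (Fin (k - k) → ℕ)))) ?_]
  · rw [Finset.sum_product]
    refine Finset.sum_congr rfl fun yy hyy => ?_
    rw [Finset.sum_congr rfl fun z _ => by rw [hcontr yy z.1 z.2], Finset.sum_const]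
    rw [Finset.card_product, Finset.card_univ, Fintype.card_unique]
    simp
  · intro q hq
    have hq1 : q.1 ∉ TT M (k - l) := by
      intro hmem
      exact hq (Finset.mem_product.2 ⟨hmem, Finset.mem_product.2
        ⟨Finset.mem_univ _, Finset.mem_univ _⟩⟩)
    rw [hczero q.1 hq1 q.2.1 q.2.2]
    ring

/-- Chebyshev-type bound: `(Σ g²)² ≤ (Σ g³)(Σ g)` for nonnegative `g`. -/
lemma sq_sum_sq_le {α : Type*} (s : Finset α) (g : α → ℝ) (hg : ∀ i, 0 ≤ g i) :
    (∑ i ∈ s, g i ^ 2) ^ 2 ≤ (∑ i ∈ s, g i ^ 3) * (∑ i ∈ s, g i) := by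
  have h1 : (∑ i ∈ s, g i ^ 2) ^ 2 = ∑ i ∈ s, ∑ j ∈ s, g i ^ 2 * g j ^ 2 := by
    rw [sq, Finset.sum_mul_sum]
  have h2 : (∑ i ∈ s, g i ^ 3) * (∑ i ∈ s, g i) = ∑ i ∈ s, ∑ j ∈ s, g i ^ 3 * g j :=
    Finset.sum_mul_sum s s _ _
  have h3 : (∑ i ∈ s, g i) * (∑ i ∈ s, g i ^ 3) = ∑ i ∈ s, ∑ j ∈ s, g i * g j ^ 3 :=
    Finset.sum_mul_sum s s _ _
  have h6 : 2 * ((∑ i ∈ s, g i ^ 2) ^ 2) ≤ 2 * ((∑ i ∈ s, g i ^ 3) * (∑ i ∈ s, g i)) := by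
    calc 2 * ((∑ i ∈ s, g i ^ 2) ^ 2) = ∑ i ∈ s, ∑ j ∈ s, 2 * (g i ^ 2 * g j ^ 2) := by
          rw [h1, Finset.mul_sum]
          exact Finset.sum_congr rfl fun i _ => by rw [Finset.mul_sum]
      _ ≤ ∑ i ∈ s, ∑ j ∈ s, (g i ^ 3 * g j + g i * g j ^ 3) := by
          refine Finset.sum_le_sum fun i _ => Finset.sum_le_sum fun j _ => ?_
          nlinarith [mul_nonneg (hg i) (hg j), sq_nonneg (g i - g j),
            mul_nonneg (mul_nonneg (hg i) (hg j)) (sq_nonneg (g i - g j))]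
      _ = (∑ i ∈ s, ∑ j ∈ s, g i ^ 3 * g j) + ∑ i ∈ s, ∑ j ∈ s, g i * g j ^ 3 := by
          rw [← Finset.sum_add_distrib]
          exact Finset.sum_congr rfl fun i _ => Finset.sum_add_distrib
      _ = (∑ i ∈ s, g i ^ 3) * (∑ i ∈ s, g i) + (∑ i ∈ s, g i) * (∑ i ∈ s, g i ^ 3) := by
          rw [← h2, ← h3]
      _ = 2 * ((∑ i ∈ s, g i ^ 3) * (∑ i ∈ s, g i)) := by ring
  linarith

end Aux

/-- counting bound for the contraction norms of the kernels `g_k`: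
`‖g_k ⋆_k^l g_k‖² ≤ C_G · max{ n^{4v_G - 2v_H - v_K} : K ⊆ H ⊆ G, e_K = k-l, e_H = k }`. -/
theorem gker_contraction_bound {V : Type} [Fintype V] (G : SimpleGraph V)
    (hE : G.edgeSet.Nonempty) (hIso : NoIsolatedVertices G) :
    ∃ C : ℝ, 0 < C ∧
      ∀ n : ℕ, Fintype.card V ≤ n →
      ∀ edge : ℕ → Sym2 (Fin n), IsEdgeEnum n edge (Nat.choose n 2) →
      ∀ k l : ℕ, l < k → k ≤ G.edgeSet.ncard →
        contrNormSq k k k l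
            (gker G n edge (Nat.choose n 2) G.edgeSet.ncard k)
            (gker G n edge (Nat.choose n 2) G.edgeSet.ncard k) ≤
          C * ⨆ P : {P : G.Subgraph × G.Subgraph //
              P.1 ≤ P.2 ∧ P.1.edgeSet.ncard = k - l ∧ P.2.edgeSet.ncard = k},
            (n : ℝ) ^ (4 * (Fintype.card V : ℤ)
              - 2 * (P.1.2.verts.ncard : ℤ) - (P.1.1.verts.ncard : ℤ)) := by
  classical
  obtain ⟨e0, he0⟩ := hE
  haveI hVne : Nonempty V := ⟨e0.out.1⟩
  haveI : Finite G.Subgraph := subgraph_finite G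
  set A : ℝ := (Fintype.card (Sym2 V) : ℝ) ^ G.edgeSet.ncard *
    (Fintype.card V : ℝ) ^ Fintype.card V with hAdef
  have hA0 : 0 ≤ A := by positivity
  set D : ℝ := A + 1 with hDdef
  have hD0 : 0 < D := by rw [hDdef]; linarith
  refine ⟨D ^ 4, by positivity, ?_⟩
  intro n hn edge henum k l hlk hk
  have hn0 : 0 < n := lt_of_lt_of_le Fintype.card_pos hn
  have hnpos : (0 : ℝ) < (n : ℝ) := by exact_mod_cast hn0
  have hnne : (n : ℝ) ≠ 0 := ne_of_gt hnpos
  set M := Nat.choose n 2 with hM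
  set eG := G.edgeSet.ncard with heG
  set vG := Fintype.card V with hvG
  have hkeG : k ≤ eG := hk
  have hlk' : l ≤ k := le_of_lt hlk
  have hkl_le : k - l ≤ eG := by omega
  set f : {P : G.Subgraph × G.Subgraph //
      P.1 ≤ P.2 ∧ P.1.edgeSet.ncard = k - l ∧ P.2.edgeSet.ncard = k} → ℝ :=
    fun P => (n : ℝ) ^ (4 * (vG : ℤ)
      - 2 * (P.1.2.verts.ncard : ℤ) - (P.1.1.verts.ncard : ℤ)) with hf
  have hbdd : BddAbove (Set.range f) := Set.Finite.bddAbove (Set.finite_range f)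
  have hSUP0 : 0 ≤ iSup f := Real.iSup_nonneg fun P => le_of_lt (zpow_pos hnpos _)
  -- the basic counting bound with constant `D`
  have hgb : ∀ (j : ℕ), j ≤ eG → ∀ t : Fin j → ℕ, gker G n edge M eG j t ≤
      D * (n : ℝ) ^ ((vG : ℤ) - (sfun n edge j t : ℤ)) := by
    intro j hj t
    refine le_trans (gker_le G n edge M eG henum hj hn0 t) ?_
    have hp : (0 : ℝ) ≤ (n : ℝ) ^ ((vG : ℤ) - (sfun n edge j t : ℤ)) :=
      le_of_lt (zpow_pos hnpos _)
    have hAD : A ≤ D := by rw [hDdef]; linarith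
    exact mul_le_mul_of_nonneg_right hAD hp
  rw [contrNormSq_eq G n edge M eG hlk' hkeG]
  -- the key pointwise bound
  have key : ∀ yy ∈ TT M (k - l),
      (∑ x ∈ TT M l, gker G n edge M eG k (pairGlue x yy) ^ 2) ^ 2 ≤
        D ^ 3 * iSup f * (n : ℝ) ^ (-(vG : ℤ)) * gker G n edge M eG (k - l) yy := by
    intro yy _
    have hsum1 : ∑ x ∈ TT M l, gker G n edge M eG k (pairGlue x yy)
        = gker G n edge M eG (k - l) yy :=
      gker_sum_out G n edge M eG (by omega) hkeG yy
    have hNnn : ∀ x : Fin l → ℕ, 0 ≤ gker G n edge M eG k (pairGlue x yy) :=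
      fun x => gker_nonneg G n edge M eG _
    have hRnn : 0 ≤ gker G n edge M eG (k - l) yy := gker_nonneg G n edge M eG _
    have hA1 : (∑ x ∈ TT M l, gker G n edge M eG k (pairGlue x yy) ^ 2) ^ 2 ≤
        (∑ x ∈ TT M l, gker G n edge M eG k (pairGlue x yy) ^ 3) *
          gker G n edge M eG (k - l) yy := by
      rw [← hsum1]
      exact sq_sum_sq_le (TT M l) _ hNnn
    have hB : ∀ x ∈ TT M l, gker G n edge M eG k (pairGlue x yy) ^ 3 ≤
        gker G n edge M eG k (pairGlue x yy) *
          (D ^ 2 * iSup f * (n : ℝ) ^ ((sfun n edge (k - l) yy : ℤ) - 2 * (vG : ℤ))) := by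
      intro x _
      rcases eq_or_lt_of_le (hNnn x) with h0 | h0
      · rw [← h0]
        simp
      · have hne2 : ∃ a : Fin (eG - k) → ℕ,
            (pairGlue a (pairGlue x yy : Fin k → ℕ) : Fin eG → ℕ) ∈ EGset G n edge M eG := by
          by_contra hcon
          push_neg at hcon
          have hz : gker G n edge M eG k (pairGlue x yy) = 0 := by
            rw [gker_eq_sum]
            exact Finset.sum_eq_zero fun a _ => Set.indicator_of_notMem (hcon a) _
          rw [hz] at h0
          exact lt_irrefl _ h0
        obtain ⟨a, hbmem⟩ := hne2
        obtain ⟨P, hP1, hP2, hP3, hP4, hP5⟩ :=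
          exists_pair G n edge M eG henum hkeG hlk' hbmem
        have hsup_ge : (n : ℝ) ^ (4 * (vG : ℤ) - 2 * (P.2.verts.ncard : ℤ)
            - (P.1.verts.ncard : ℤ)) ≤ iSup f := le_ciSup hbdd ⟨P, hP1, hP2, hP3⟩
        have hNb : gker G n edge M eG k (pairGlue x yy) ≤
            D * (n : ℝ) ^ ((vG : ℤ) - (P.2.verts.ncard : ℤ)) := by
          rw [hP4]
          exact hgb k hkeG _
        have hpow2 : ((n : ℝ) ^ ((vG : ℤ) - (P.2.verts.ncard : ℤ))) ^ 2
            = (n : ℝ) ^ (4 * (vG : ℤ) - 2 * (P.2.verts.ncard : ℤ) - (P.1.verts.ncard : ℤ))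
              * (n : ℝ) ^ ((P.1.verts.ncard : ℤ) - 2 * (vG : ℤ)) := by
          rw [sq, ← zpow_add₀ hnne, ← zpow_add₀ hnne]
          congr 1
          ring
        calc gker G n edge M eG k (pairGlue x yy) ^ 3
            = gker G n edge M eG k (pairGlue x yy) *
              gker G n edge M eG k (pairGlue x yy) ^ 2 := by ring
          _ ≤ gker G n edge M eG k (pairGlue x yy) *
              ((D * (n : ℝ) ^ ((vG : ℤ) - (P.2.verts.ncard : ℤ))) ^ 2) := by
              exact mul_le_mul_of_nonneg_left (pow_le_pow_left₀ (hNnn x) hNb 2) (hNnn x)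
          _ = gker G n edge M eG k (pairGlue x yy) * (D ^ 2 *
              ((n : ℝ) ^ (4 * (vG : ℤ) - 2 * (P.2.verts.ncard : ℤ) - (P.1.verts.ncard : ℤ))
                * (n : ℝ) ^ ((P.1.verts.ncard : ℤ) - 2 * (vG : ℤ)))) := by
              rw [mul_pow, hpow2]
          _ ≤ gker G n edge M eG k (pairGlue x yy) * (D ^ 2 *
              (iSup f * (n : ℝ) ^ ((P.1.verts.ncard : ℤ) - 2 * (vG : ℤ)))) := by
              refine mul_le_mul_of_nonneg_left ?_ (hNnn x)
              refine mul_le_mul_of_nonneg_left ?_ (pow_nonneg (le_of_lt hD0) 2)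
              exact mul_le_mul_of_nonneg_right hsup_ge (le_of_lt (zpow_pos hnpos _))
          _ = gker G n edge M eG k (pairGlue x yy) *
              (D ^ 2 * iSup f * (n : ℝ) ^ ((sfun n edge (k - l) yy : ℤ) - 2 * (vG : ℤ))) := by
              rw [← hP5]
              ring
    have hstep : (∑ x ∈ TT M l, gker G n edge M eG k (pairGlue x yy) ^ 3) ≤
        (D ^ 2 * iSup f * (n : ℝ) ^ ((sfun n edge (k - l) yy : ℤ) - 2 * (vG : ℤ))) *
          gker G n edge M eG (k - l) yy := by
      calc (∑ x ∈ TT M l, gker G n edge M eG k (pairGlue x yy) ^ 3)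
          ≤ ∑ x ∈ TT M l, gker G n edge M eG k (pairGlue x yy) *
            (D ^ 2 * iSup f * (n : ℝ) ^ ((sfun n edge (k - l) yy : ℤ) - 2 * (vG : ℤ))) :=
            Finset.sum_le_sum hB
        _ = (D ^ 2 * iSup f * (n : ℝ) ^ ((sfun n edge (k - l) yy : ℤ) - 2 * (vG : ℤ))) *
            gker G n edge M eG (k - l) yy := by
            rw [← Finset.sum_mul, hsum1]
            ring
    have hcst : (0 : ℝ) ≤ D ^ 2 * iSup f *
        (n : ℝ) ^ ((sfun n edge (k - l) yy : ℤ) - 2 * (vG : ℤ)) :=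
      mul_nonneg (mul_nonneg (pow_nonneg (le_of_lt hD0) 2) hSUP0) (le_of_lt (zpow_pos hnpos _))
    have hzpcol : (n : ℝ) ^ ((sfun n edge (k - l) yy : ℤ) - 2 * (vG : ℤ)) *
        (n : ℝ) ^ ((vG : ℤ) - (sfun n edge (k - l) yy : ℤ)) = (n : ℝ) ^ (-(vG : ℤ)) := by
      rw [← zpow_add₀ hnne]
      congr 1
      ring
    calc (∑ x ∈ TT M l, gker G n edge M eG k (pairGlue x yy) ^ 2) ^ 2
        ≤ (∑ x ∈ TT M l, gker G n edge M eG k (pairGlue x yy) ^ 3) *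
          gker G n edge M eG (k - l) yy := hA1
      _ ≤ ((D ^ 2 * iSup f * (n : ℝ) ^ ((sfun n edge (k - l) yy : ℤ) - 2 * (vG : ℤ))) *
          gker G n edge M eG (k - l) yy) * gker G n edge M eG (k - l) yy :=
          mul_le_mul_of_nonneg_right hstep hRnn
      _ ≤ ((D ^ 2 * iSup f * (n : ℝ) ^ ((sfun n edge (k - l) yy : ℤ) - 2 * (vG : ℤ))) *
          (D * (n : ℝ) ^ ((vG : ℤ) - (sfun n edge (k - l) yy : ℤ)))) *
            gker G n edge M eG (k - l) yy := by
          refine mul_le_mul_of_nonneg_right ?_ hRnn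
          refine mul_le_mul_of_nonneg_left ?_ hcst
          exact hgb (k - l) hkl_le yy
      _ = D ^ 3 * iSup f * ((n : ℝ) ^ ((sfun n edge (k - l) yy : ℤ) - 2 * (vG : ℤ)) *
          (n : ℝ) ^ ((vG : ℤ) - (sfun n edge (k - l) yy : ℤ))) *
            gker G n edge M eG (k - l) yy := by ring
      _ = D ^ 3 * iSup f * (n : ℝ) ^ (-(vG : ℤ)) * gker G n edge M eG (k - l) yy := by
          rw [hzpcol]
  -- summing over `yy`
  have hid0 : ∀ xx : Fin (k - l) → ℕ,
      (pairGlue xx (fun _ : Fin 0 => 0) : Fin (k - l) → ℕ) = xx := by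
    intro xx
    funext i
    rw [pairGlue_self le_rfl xx _ i]
  have hsum0 := gker_sum_out G n edge M eG (show (k - l) + 0 = k - l by omega) hkl_le
    (fun _ : Fin 0 => 0)
  rw [Finset.sum_congr rfl fun xx _ => by rw [hid0 xx]] at hsum0
  have hsfun0 : sfun n edge 0 (fun _ : Fin 0 => 0) = 0 := by
    simp [sfun, Sfin]
  have hpre : (0 : ℝ) ≤ D ^ 3 * iSup f * (n : ℝ) ^ (-(vG : ℤ)) :=
    mul_nonneg (mul_nonneg (pow_nonneg (le_of_lt hD0) 3) hSUP0) (le_of_lt (zpow_pos hnpos _))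
  have hfinal : gker G n edge M eG 0 (fun _ : Fin 0 => 0) ≤ D * (n : ℝ) ^ ((vG : ℤ)) := by
    have h := hgb 0 (Nat.zero_le _) (fun _ : Fin 0 => 0)
    rwa [hsfun0, Nat.cast_zero, sub_zero] at h
  have hone : (n : ℝ) ^ (-(vG : ℤ)) * (n : ℝ) ^ ((vG : ℤ)) = 1 := by
    rw [← zpow_add₀ hnne]
    simp
  calc ∑ yy ∈ TT M (k - l), (∑ x ∈ TT M l, gker G n edge M eG k (pairGlue x yy) ^ 2) ^ 2
      ≤ ∑ yy ∈ TT M (k - l),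
        D ^ 3 * iSup f * (n : ℝ) ^ (-(vG : ℤ)) * gker G n edge M eG (k - l) yy :=
        Finset.sum_le_sum key
    _ = D ^ 3 * iSup f * (n : ℝ) ^ (-(vG : ℤ)) *
        ∑ yy ∈ TT M (k - l), gker G n edge M eG (k - l) yy := by
        rw [Finset.mul_sum]
    _ = D ^ 3 * iSup f * (n : ℝ) ^ (-(vG : ℤ)) *
        gker G n edge M eG 0 (fun _ : Fin 0 => 0) := by rw [hsum0]
    _ ≤ D ^ 3 * iSup f * (n : ℝ) ^ (-(vG : ℤ)) * (D * (n : ℝ) ^ ((vG : ℤ))) :=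
        mul_le_mul_of_nonneg_left hfinal hpre
    _ = D ^ 4 * iSup f * ((n : ℝ) ^ (-(vG : ℤ)) * (n : ℝ) ^ ((vG : ℤ))) := by ring
    _ = D ^ 4 * iSup f := by rw [hone, mul_one]

end PaperC
end
end
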